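/- arXiv:1312.1065 — 5 statements merged into one kernel-verified Lean document; each statement's English description precedes it below -/
import Mathlib

section
/- Let b ≥ 2 be an integer and ξ a real number. Then ξ is normal to base b if and only if the sequence (ξ b^n)_{n≥0} is uniformly distributed modulo 1. -/
open scoped Classical

/-- The `k`-th digit (for `k ≥ 1`) after the point in the base-`b` expansion of `ξ`
(taking the expansion not ending in all digits `b - 1`). -/
noncomputable def digit (b : ℕ) (ξ : ℝ) (k : ℕ) : ℕ := (⌊ξ * (b : ℝ) ^ k⌋ % (b : ℤ)).toNat

/-- `ξ` is normal to base `b`: every block `w` of `m ≥ 1` digits from `{0, …, b-1}` occurs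
in the base-`b` digit sequence of `ξ` with asymptotic frequency `b^{-m}`. -/
noncomputable def IsNormal (b : ℕ) (ξ : ℝ) : Prop :=
  ∀ m : ℕ, 0 < m → ∀ w : Fin m → ℕ, (∀ j, w j < b) →
    Filter.Tendsto
      (fun N : ℕ => (((Finset.Icc 1 N).filter
        (fun i => ∀ j : Fin m, digit b ξ (i + (j : ℕ)) = w j)).card : ℝ) / N)
      Filter.atTop (nhds (1 / (b : ℝ) ^ m))

/-- The sequence `(x n)` is uniformly distributed modulo one: for all `0 ≤ u < v ≤ 1`, the
proportion of `n ∈ {1, …, N}` with `u ≤ {x n} ≤ v` tends to `v - u`. -/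
noncomputable def UnifDistMod1 (x : ℕ → ℝ) : Prop :=
  ∀ u v : ℝ, 0 ≤ u → u < v → v ≤ 1 →
    Filter.Tendsto
      (fun N : ℕ => (((Finset.Icc 1 N).filter
        (fun n => u ≤ Int.fract (x n) ∧ Int.fract (x n) ≤ v)).card : ℝ) / N)
      Filter.atTop (nhds (v - u))

open Filter

set_option maxHeartbeats 1000000


section helpers

variable {b : ℕ}

lemma floor_mul_int (hb : 2 ≤ b) (t : ℝ) : ⌊t * (b:ℝ)⌋ = (b:ℤ) * ⌊t⌋ + ⌊t * (b:ℝ)⌋ % b := by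
  have hb0 : (0:ℝ) < b := by positivity
  have h1 : (b:ℤ) * ⌊t⌋ ≤ ⌊t * (b:ℝ)⌋ := by
    rw [Int.le_floor]
    push_cast
    have := Int.floor_le t
    nlinarith
  have h2 : ⌊t * (b:ℝ)⌋ < (b:ℤ) * ⌊t⌋ + b := by
    rw [← @Int.cast_lt ℝ] at *
    calc (⌊t * (b:ℝ)⌋ : ℝ) ≤ t * b := Int.floor_le _
    _ < _ := by push_cast; have := Int.lt_floor_add_one t; nlinarith
  have h3 : (⌊t * (b:ℝ)⌋ - (b:ℤ) * ⌊t⌋) % b = ⌊t * (b:ℝ)⌋ - (b:ℤ) * ⌊t⌋ :=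
    Int.emod_eq_of_lt (by omega) (by omega)
  have h4 : (⌊t * (b:ℝ)⌋ - (b:ℤ) * ⌊t⌋) % b = ⌊t * (b:ℝ)⌋ % b := by
    have : ⌊t * (b:ℝ)⌋ - (b:ℤ) * ⌊t⌋ = ⌊t * (b:ℝ)⌋ + (b:ℤ) * (-⌊t⌋) := by ring
    rw [this, Int.add_mul_emod_self_left]
  omega

/-- digit expansion of the floor of `y * b^m` for `y ∈ [0,1)`. -/
lemma floor_expansion (hb : 2 ≤ b) {y : ℝ} (h0 : 0 ≤ y) (h1 : y < 1) (m : ℕ) :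
    ⌊y * (b:ℝ)^m⌋ = ∑ j ∈ Finset.range m, (⌊y * (b:ℝ)^(j+1)⌋ % b) * (b:ℤ)^(m-1-j) := by
  induction m with
  | zero => simp [Int.floor_eq_zero_iff, Set.mem_Ico, h0, h1]
  | succ m ih =>
    rw [Finset.sum_range_succ]
    have key : ⌊y * (b:ℝ)^(m+1)⌋ = (b:ℤ) * ⌊y * (b:ℝ)^m⌋ + ⌊y * (b:ℝ)^(m+1)⌋ % b := by
      have := floor_mul_int hb (y * (b:ℝ)^m)
      rw [mul_assoc, ← pow_succ] at this
      exact this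
    have hsum : ∑ j ∈ Finset.range m, (⌊y * (b:ℝ)^(j+1)⌋ % b) * (b:ℤ)^(m+1-1-j)
        = (b:ℤ) * ∑ j ∈ Finset.range m, (⌊y * (b:ℝ)^(j+1)⌋ % b) * (b:ℤ)^(m-1-j) := by
      rw [Finset.mul_sum]
      apply Finset.sum_congr rfl
      intro j hj
      have hj' : j < m := Finset.mem_range.mp hj
      have : m + 1 - 1 - j = (m - 1 - j) + 1 := by omega
      rw [this, pow_succ]
      ring
    have h00 : m + 1 - 1 - m = 0 := by omega
    conv_lhs => rw [key]
    rw [hsum, ← ih, h00, pow_zero, mul_one]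

lemma digits_unique (hb : 2 ≤ b) : ∀ (m : ℕ) (d e : ℕ → ℤ),
    (∀ j, 0 ≤ d j ∧ d j < b) → (∀ j, 0 ≤ e j ∧ e j < b) →
    (∑ j ∈ Finset.range m, d j * (b:ℤ)^(m-1-j)) = (∑ j ∈ Finset.range m, e j * (b:ℤ)^(m-1-j)) →
    ∀ j < m, d j = e j := by
  intro m
  induction m with
  | zero => intro d e _ _ _ j hj; omega
  | succ m ih =>
    intro d e hd he hsum j hj
    have split : ∀ f : ℕ → ℤ, (∀ j, 0 ≤ f j ∧ f j < b) →
        ∑ j ∈ Finset.range (m+1), f j * (b:ℤ)^(m+1-1-j)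
        = (b:ℤ) * (∑ j ∈ Finset.range m, f j * (b:ℤ)^(m-1-j)) + f m := by
      intro f hf
      rw [Finset.sum_range_succ, Finset.mul_sum]
      have : ∀ j ∈ Finset.range m, f j * (b:ℤ)^(m+1-1-j) = (b:ℤ) * (f j * (b:ℤ)^(m-1-j)) := by
        intro j hj'
        have hj'' : j < m := Finset.mem_range.mp hj'
        have : m + 1 - 1 - j = (m - 1 - j) + 1 := by omega
        rw [this, pow_succ]; ring
      rw [Finset.sum_congr rfl this]
      have h00 : m + 1 - 1 - m = 0 := by omega
      rw [h00, pow_zero, mul_one]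
    rw [split d hd, split e he] at hsum
    set S := ∑ j ∈ Finset.range m, d j * (b:ℤ)^(m-1-j)
    set T := ∑ j ∈ Finset.range m, e j * (b:ℤ)^(m-1-j)
    have hdm := hd m
    have hem := he m
    have hmod : d m = e m := by
      have h1 : ((b:ℤ) * S + d m) % b = d m := by
        rw [add_comm, Int.add_mul_emod_self_left, Int.emod_eq_of_lt hdm.1 hdm.2]
      have h2 : ((b:ℤ) * T + e m) % b = e m := by
        rw [add_comm, Int.add_mul_emod_self_left, Int.emod_eq_of_lt hem.1 hem.2]
      rw [hsum] at h1; omega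
    have hST : S = T := by
      have hb0 : (b:ℤ) ≠ 0 := by positivity
      have : (b:ℤ) * S = (b:ℤ) * T := by omega
      exact mul_left_cancel₀ hb0 this
    rcases Nat.lt_or_ge j m with h | h
    · exact ih d e hd he hST j h
    · have : j = m := by omega
      rw [this]; exact hmod

lemma digits_lt (hb : 2 ≤ b) : ∀ (m : ℕ) (w : ℕ → ℕ), (∀ j, j < m → w j < b) →
    ∑ j ∈ Finset.range m, w j * b^(m-1-j) < b^m := by
  intro m
  induction m with
  | zero => intro w _; simp
  | succ m ih =>
    intro w hw
    have split : ∑ j ∈ Finset.range (m+1), w j * b^(m+1-1-j)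
        = b * (∑ j ∈ Finset.range m, w j * b^(m-1-j)) + w m := by
      rw [Finset.sum_range_succ, Finset.mul_sum]
      have : ∀ j ∈ Finset.range m, w j * b^(m+1-1-j) = b * (w j * b^(m-1-j)) := by
        intro j hj'
        have hj'' : j < m := Finset.mem_range.mp hj'
        have : m + 1 - 1 - j = (m - 1 - j) + 1 := by omega
        rw [this, pow_succ]; ring
      rw [Finset.sum_congr rfl this]
      have h00 : m + 1 - 1 - m = 0 := by omega
      rw [h00, pow_zero, mul_one]
    rw [split]
    have h1 := ih w (fun j hj => hw j (by omega))
    have h2 := hw m (by omega)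
    have : b * (∑ j ∈ Finset.range m, w j * b^(m-1-j)) + w m < b * b^m := by nlinarith
    calc b * (∑ j ∈ Finset.range m, w j * b^(m-1-j)) + w m < b * b^m := this
    _ = b^(m+1) := by rw [pow_succ]; ring

lemma exists_digits (hb : 2 ≤ b) : ∀ (m c : ℕ), c < b^m →
    ∃ w : ℕ → ℕ, (∀ j, w j < b) ∧ ∑ j ∈ Finset.range m, w j * b^(m-1-j) = c := by
  intro m
  induction m with
  | zero =>
    intro c hc
    have hc0 : c = 0 := by simpa using hc
    exact ⟨fun _ => 0, fun j => by show (0:ℕ) < b; omega, by simp [hc0]⟩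
  | succ m ih =>
    intro c hc
    have hb0 : 0 < b := by omega
    have hdiv : c / b < b^m := by
      rw [Nat.div_lt_iff_lt_mul hb0]
      calc c < b^(m+1) := hc
      _ = b^m * b := by rw [pow_succ]
    obtain ⟨w0, hw0, hsum0⟩ := ih (c / b) hdiv
    refine ⟨fun j => if j = m then c % b else w0 j, fun j => ?_, ?_⟩
    · by_cases h : j = m
      · simp [h, Nat.mod_lt _ hb0]
      · simp [h, hw0 j]
    · rw [Finset.sum_range_succ]
      simp only [if_pos rfl]
      have : ∀ j ∈ Finset.range m,
          (if j = m then c % b else w0 j) * b^(m+1-1-j) = b * (w0 j * b^(m-1-j)) := by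
        intro j hj'
        have hj'' : j < m := Finset.mem_range.mp hj'
        rw [if_neg (by omega)]
        have : m + 1 - 1 - j = (m - 1 - j) + 1 := by omega
        rw [this, pow_succ]; ring
      rw [Finset.sum_congr rfl this, ← Finset.mul_sum, hsum0]
      have h00 : m + 1 - 1 - m = 0 := by omega
      rw [h00, pow_zero, mul_one]
      exact Nat.div_add_mod c b

end helpers


noncomputable def cnt (p : ℕ → Prop) (N : ℕ) : ℕ := ((Finset.Icc 1 N).filter p).card

lemma cnt_mono {p q : ℕ → Prop} (h : ∀ n, p n → q n) (N : ℕ) : cnt p N ≤ cnt q N := by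
  apply Finset.card_le_card
  intro a ha
  simp only [cnt, Finset.mem_filter] at ha ⊢
  exact ⟨ha.1, h a ha.2⟩

lemma cnt_congr {p q : ℕ → Prop} (h : ∀ n, p n ↔ q n) (N : ℕ) : cnt p N = cnt q N := by
  unfold cnt; congr 1; exact Finset.filter_congr fun x _ => h x

lemma cnt_cast_eq {p q : ℕ → Prop} [inst : DecidablePred q] (h : ∀ n, p n ↔ q n) (N : ℕ) :
    ((cnt p N : ℕ) : ℝ) = (((Finset.Icc 1 N).filter q).card : ℝ) := by
  congr 1
  unfold cnt
  congr 1
  ext a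
  simp only [Finset.mem_filter]
  constructor
  · rintro ⟨h1, h2⟩; exact ⟨h1, (h a).mp h2⟩
  · rintro ⟨h1, h2⟩; exact ⟨h1, (h a).mpr h2⟩

lemma div_le_div_nat {a b : ℝ} (N : ℕ) (h : a ≤ b) : a / N ≤ b / N := by
  rw [div_eq_mul_inv, div_eq_mul_inv]
  exact mul_le_mul_of_nonneg_right h (by positivity)

lemma sandwich {f : ℕ → ℝ} {L : ℝ}
    (h : ∀ ε : ℝ, 0 < ε → ∃ g h' : ℕ → ℝ, ∃ Lg Lh : ℝ,
      Tendsto g atTop (nhds Lg) ∧ Tendsto h' atTop (nhds Lh) ∧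
      (∀ n, g n ≤ f n) ∧ (∀ n, f n ≤ h' n) ∧ L - ε < Lg ∧ Lh < L + ε) :
    Tendsto f atTop (nhds L) := by
  rw [Metric.tendsto_nhds]
  intro ε hε
  obtain ⟨g, h', Lg, Lh, hg, hh, hgf, hfh, h5, h6⟩ := h ε hε
  have e1 := hg.eventually_const_lt h5
  have e2 := hh.eventually_lt_const h6
  filter_upwards [e1, e2] with n a1 a2
  rw [Real.dist_eq, abs_sub_lt_iff]
  constructor
  · linarith [hfh n]
  · linarith [hgf n]

lemma ratio_tendsto : Tendsto (fun N : ℕ => ((N : ℝ) + 1) / N) atTop (nhds 1) := by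
  have h : Tendsto (fun N : ℕ => 1 + 1 / (N:ℝ)) atTop (nhds 1) := by
    have := (tendsto_const_nhds : Tendsto (fun _ : ℕ => (1:ℝ)) atTop (nhds 1)).add
      tendsto_one_div_atTop_nhds_zero_nat
    simpa using this
  apply h.congr'
  filter_upwards [eventually_ge_atTop 1] with N hN
  have : (N:ℝ) ≠ 0 := by positivity
  field_simp

lemma ratio_tendsto' : Tendsto (fun N : ℕ => (N : ℝ) / (N + 1)) atTop (nhds 1) := by
  have h := ratio_tendsto.inv₀ (by norm_num)
  simpa [inv_div] using h

lemma cnt_succ (p : ℕ → Prop) (N : ℕ) :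
    cnt p (N + 1) = cnt (fun n => p (n + 1)) N + (if p 1 then 1 else 0) := by
  have h1 : cnt (fun n => p (n+1)) N = ((Finset.Icc 2 (N+1)).filter p).card := by
    unfold cnt
    refine Finset.card_bij' (fun n _ => n + 1) (fun n _ => n - 1) ?_ ?_ ?_ ?_
    · intro a ha
      simp only [Finset.mem_filter, Finset.mem_Icc] at ha ⊢
      exact ⟨⟨by omega, by omega⟩, ha.2⟩
    · intro a ha
      simp only [Finset.mem_filter, Finset.mem_Icc] at ha ⊢
      refine ⟨⟨by omega, by omega⟩, ?_⟩
      have : a - 1 + 1 = a := by omega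
      rw [this]; exact ha.2
    · intro a ha; show a + 1 - 1 = a; omega
    · intro a ha
      simp only [Finset.mem_filter, Finset.mem_Icc] at ha
      show a - 1 + 1 = a
      omega
  have h2 : Finset.Icc 1 (N+1) = insert 1 (Finset.Icc 2 (N+1)) := by
    ext x; simp only [Finset.mem_Icc, Finset.mem_insert]; omega
  unfold cnt
  rw [h2, Finset.filter_insert]
  by_cases hp : p 1
  · rw [if_pos hp, if_pos hp, Finset.card_insert_of_notMem (by
      simp only [Finset.mem_filter, Finset.mem_Icc]; omega), ← h1]
    rfl
  · rw [if_neg hp, if_neg hp, ← h1]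
    rfl

lemma tendsto_shift {p : ℕ → Prop} {L : ℝ} :
    Tendsto (fun N => (cnt p N : ℝ) / N) atTop (nhds L) ↔
    Tendsto (fun N => (cnt (fun n => p (n + 1)) N : ℝ) / N) atTop (nhds L) := by
  set E : ℝ := if p 1 then 1 else 0 with hE
  have key : ∀ N : ℕ, (cnt (fun n => p (n+1)) N : ℝ) = (cnt p (N+1) : ℝ) - E := by
    intro N
    rw [cnt_succ p N]
    push_cast
    split <;> rename_i hp1 <;> simp [hE, hp1]
  constructor
  · intro hf
    have h1 : Tendsto (fun N : ℕ => (cnt p (N+1) : ℝ) / (N+1)) atTop (nhds L) := by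
      have := hf.comp (tendsto_add_atTop_nat 1)
      apply this.congr
      intro N
      simp only [Function.comp_apply]
      push_cast
      rfl
    have h2 : Tendsto (fun N : ℕ => (cnt p (N+1) : ℝ) / N) atTop (nhds L) := by
      have hm := h1.mul ratio_tendsto
      rw [mul_one] at hm
      apply hm.congr'
      filter_upwards [eventually_ge_atTop 1] with N hN
      have h1' : (N:ℝ) ≠ 0 := by positivity
      have h2' : (N:ℝ) + 1 ≠ 0 := by positivity
      field_simp
    have h3 : Tendsto (fun N : ℕ => E / N) atTop (nhds 0) :=
      tendsto_const_nhds.div_atTop tendsto_natCast_atTop_atTop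
    have := h2.sub h3
    rw [sub_zero] at this
    apply this.congr
    intro N
    rw [key N, sub_div]
  · intro hg
    have h1 : Tendsto (fun N : ℕ => (cnt p (N+1) : ℝ) / N) atTop (nhds L) := by
      have h3 : Tendsto (fun N : ℕ => E / N) atTop (nhds 0) :=
        tendsto_const_nhds.div_atTop tendsto_natCast_atTop_atTop
      have := hg.add h3
      rw [add_zero] at this
      apply this.congr
      intro N
      rw [key N, sub_div, sub_add_cancel]
    have h2 : Tendsto (fun N : ℕ => (cnt p (N+1) : ℝ) / (N+1)) atTop (nhds L) := by
      have hm := h1.mul ratio_tendsto'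
      rw [mul_one] at hm
      apply hm.congr'
      filter_upwards [eventually_ge_atTop 1] with N hN
      have h1' : (N:ℝ) ≠ 0 := by positivity
      have h2' : (N:ℝ) + 1 ≠ 0 := by positivity
      field_simp
    rw [← Filter.tendsto_add_atTop_iff_nat 1]
    apply h2.congr
    intro N
    push_cast
    rfl



section digitfloor

variable {b : ℕ}

lemma digit_cast (hb : 2 ≤ b) (ξ : ℝ) (n j : ℕ) :
    (digit b ξ (n + 1 + j) : ℤ) = ⌊Int.fract (ξ * (b:ℝ)^n) * (b:ℝ)^(j+1)⌋ % b := by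
  have hb0 : (0:ℤ) < b := by positivity
  unfold digit
  rw [Int.toNat_of_nonneg (Int.emod_nonneg _ (by omega))]
  have hx : ξ * (b:ℝ)^(n+1+j)
      = ((⌊ξ * (b:ℝ)^n⌋ * (b:ℤ)^(j+1) : ℤ) : ℝ) + Int.fract (ξ * (b:ℝ)^n) * (b:ℝ)^(j+1) := by
    push_cast
    rw [← add_mul, Int.floor_add_fract]
    have he : n + 1 + j = n + (j + 1) := by omega
    rw [he, pow_add]
    ring
  rw [hx, Int.floor_intCast_add]
  have : ⌊ξ * (b:ℝ)^n⌋ * (b:ℤ)^(j+1) + ⌊Int.fract (ξ * (b:ℝ)^n) * (b:ℝ)^(j+1)⌋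
      = ⌊Int.fract (ξ * (b:ℝ)^n) * (b:ℝ)^(j+1)⌋ + (b:ℤ) * (⌊ξ * (b:ℝ)^n⌋ * (b:ℤ)^j) := by
    rw [pow_succ]; ring
  rw [this, Int.add_mul_emod_self_left]

end digitfloor

section mainlemmas

variable {b : ℕ}

lemma block_iff (hb : 2 ≤ b) (ξ : ℝ) (m : ℕ) (w : ℕ → ℕ) (hw : ∀ j, w j < b) (n : ℕ) :
    (∀ j < m, digit b ξ (n + 1 + j) = w j) ↔
      ⌊Int.fract (ξ * (b:ℝ)^n) * (b:ℝ)^m⌋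
        = ((∑ j ∈ Finset.range m, w j * b^(m-1-j) : ℕ) : ℤ) := by
  set y := Int.fract (ξ * (b:ℝ)^n) with hy
  have hy0 : 0 ≤ y := Int.fract_nonneg _
  have hy1 : y < 1 := Int.fract_lt_one _
  have hd : ∀ j, (digit b ξ (n+1+j) : ℤ) = ⌊y * (b:ℝ)^(j+1)⌋ % b := fun j => digit_cast hb ξ n j
  have hexp := floor_expansion hb hy0 hy1 m
  have hcast : ((∑ j ∈ Finset.range m, w j * b^(m-1-j) : ℕ) : ℤ)
      = ∑ j ∈ Finset.range m, (w j : ℤ) * (b:ℤ)^(m-1-j) := by push_cast; rfl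
  constructor
  · intro h
    rw [hexp, hcast]
    apply Finset.sum_congr rfl
    intro j hj
    have hj' : j < m := Finset.mem_range.mp hj
    rw [← hd j, h j hj']
  · intro h j hj
    have hsum : (∑ j ∈ Finset.range m, (⌊y * (b:ℝ)^(j+1)⌋ % b) * (b:ℤ)^(m-1-j))
        = ∑ j ∈ Finset.range m, (w j : ℤ) * (b:ℤ)^(m-1-j) := by
      rw [← hexp, h, hcast]
    have hu := digits_unique hb m (fun j => ⌊y * (b:ℝ)^(j+1)⌋ % b) (fun j => (w j : ℤ))
      (fun j => ⟨Int.emod_nonneg _ (by omega), Int.emod_lt_of_pos _ (by positivity)⟩)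
      (fun j => ⟨by show (0:ℤ) ≤ ((w j : ℕ) : ℤ); positivity,
        by show ((w j : ℕ) : ℤ) < (b:ℤ); exact_mod_cast hw j⟩) hsum j hj
    have hu' : ⌊y * (b:ℝ)^(j+1)⌋ % b = ((w j : ℕ) : ℤ) := hu
    have := (hd j).trans hu'
    exact_mod_cast this

lemma cell_tendsto (hb : 2 ≤ b) (ξ : ℝ) (hnorm : IsNormal b ξ) {m : ℕ} (hm : 0 < m) {c : ℤ}
    (hc0 : 0 ≤ c) (hc : c < (b:ℤ)^m) :
    Tendsto (fun N => (cnt (fun n => ⌊Int.fract (ξ * (b:ℝ)^n) * (b:ℝ)^m⌋ = c) N : ℝ) / N)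
      atTop (nhds (1 / (b:ℝ)^m)) := by
  have hcn : c.toNat < b^m := by
    have hpow : ((b:ℤ)^m) = ((b^m : ℕ) : ℤ) := by push_cast; rfl
    omega
  obtain ⟨w0, hw0b, hw0s⟩ := exists_digits hb m c.toNat hcn
  have h1 : Tendsto (fun N => (cnt (fun i => ∀ j : Fin m, digit b ξ (i + (j:ℕ)) = w0 (j:ℕ)) N : ℝ)/N)
      atTop (nhds (1/(b:ℝ)^m)) := by
    apply (hnorm m hm (fun j => w0 (j:ℕ)) (fun j => hw0b j)).congr
    intro N
    exact (congrArg (· / (N:ℝ)) (cnt_cast_eq (fun n => Iff.rfl) N)).symm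
  rw [tendsto_shift] at h1
  have hiff : ∀ n : ℕ, (∀ j : Fin m, digit b ξ (n + 1 + (j:ℕ)) = w0 (j:ℕ)) ↔
      (⌊Int.fract (ξ * (b:ℝ)^n) * (b:ℝ)^m⌋ = c) := by
    intro n
    have hfin : (∀ j : Fin m, digit b ξ (n + 1 + (j:ℕ)) = w0 (j:ℕ)) ↔
        (∀ j, j < m → digit b ξ (n+1+j) = w0 j) :=
      ⟨fun h j hj => h ⟨j, hj⟩, fun h j => h (j:ℕ) j.2⟩
    rw [hfin, block_iff hb ξ m w0 hw0b n, hw0s, Int.toNat_of_nonneg hc0]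
  apply h1.congr
  intro N
  rw [cnt_congr hiff N]

lemma range_tendsto (hb : 2 ≤ b) (ξ : ℝ) (hnorm : IsNormal b ξ) {m : ℕ} (hm : 0 < m)
    {k1 k2 : ℤ} (h0 : 0 ≤ k1) (h12 : k1 ≤ k2) (h2 : k2 ≤ (b:ℤ)^m) :
    Tendsto (fun N => (cnt (fun n => k1 ≤ ⌊Int.fract (ξ*(b:ℝ)^n) * (b:ℝ)^m⌋
        ∧ ⌊Int.fract (ξ*(b:ℝ)^n) * (b:ℝ)^m⌋ < k2) N : ℝ)/N) atTop
      (nhds (((k2 - k1 : ℤ) : ℝ)/(b:ℝ)^m)) := by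
  have hcard : ∀ N, (cnt (fun n => k1 ≤ ⌊Int.fract (ξ*(b:ℝ)^n) * (b:ℝ)^m⌋
      ∧ ⌊Int.fract (ξ*(b:ℝ)^n) * (b:ℝ)^m⌋ < k2) N : ℝ)
      = ∑ c ∈ Finset.Ico k1 k2,
        (cnt (fun n => ⌊Int.fract (ξ*(b:ℝ)^n) * (b:ℝ)^m⌋ = c) N : ℝ) := by
    intro N
    rw [← Nat.cast_sum]
    congr 1
    unfold cnt
    rw [Finset.card_eq_sum_card_fiberwise
      (f := fun n => ⌊Int.fract (ξ*(b:ℝ)^n) * (b:ℝ)^m⌋) (t := Finset.Ico k1 k2)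
      (fun x hx => by
        simp only [Finset.mem_coe, Finset.mem_filter] at hx
        simp only [Finset.mem_coe, Finset.mem_Ico]
        exact hx.2)]
    apply Finset.sum_congr rfl
    intro c hc
    congr 1
    ext a
    simp only [Finset.mem_filter, Finset.mem_Icc]
    simp only [Finset.mem_Ico] at hc
    constructor
    · rintro ⟨⟨h1, _⟩, h2⟩; exact ⟨h1, h2⟩
    · rintro ⟨h1, h2⟩
      refine ⟨⟨h1, ?_⟩, h2⟩
      rw [h2]
      exact ⟨hc.1, hc.2⟩
  have hsum := tendsto_finset_sum (Finset.Ico k1 k2)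
    (fun c hc => by
      have hc' := Finset.mem_Ico.mp hc
      exact cell_tendsto hb ξ hnorm hm (le_trans h0 hc'.1) (lt_of_lt_of_le hc'.2 h2))
  have hval : ((k2 - k1 : ℤ):ℝ)/(b:ℝ)^m = ∑ _c ∈ Finset.Ico k1 k2, 1/(b:ℝ)^m := by
    rw [Finset.sum_const, Int.card_Ico, nsmul_eq_mul,
      show (((k2 - k1).toNat : ℕ) : ℝ) = ((k2 - k1 : ℤ) : ℝ) from by
        exact_mod_cast Int.toNat_of_nonneg (by omega : (0:ℤ) ≤ k2 - k1)]
    ring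
  rw [hval]
  apply hsum.congr
  intro N
  rw [← Finset.sum_div, ← hcard N]

end mainlemmas

/-- `ξ` is normal to base `b` iff the sequence `(ξ b^n)_{n ≥ 0}` is uniformly
distributed modulo one. -/
theorem isNormal_iff_unifDistMod1 (b : ℕ) (hb : 2 ≤ b) (ξ : ℝ) :
    IsNormal b ξ ↔ UnifDistMod1 (fun n : ℕ => ξ * (b : ℝ) ^ n) := by
  have hb2 : (2:ℝ) ≤ (b:ℝ) := by exact_mod_cast hb
  have hb1 : (1:ℝ) < (b:ℝ) := by linarith
  constructor
  · -- normal → u.d.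
    intro hnorm u v hu huv hv
    have hmain : Tendsto (fun N => (cnt (fun n => u ≤ Int.fract (ξ * (b:ℝ)^n)
        ∧ Int.fract (ξ * (b:ℝ)^n) ≤ v) N : ℝ)/N) atTop (nhds (v - u)) := ?_
    case _ =>
      apply hmain.congr
      intro N
      exact congrArg (· / (N:ℝ)) (cnt_cast_eq (fun n => Iff.rfl) N)
    apply sandwich
    intro ε hε
    obtain ⟨m0, hm0⟩ := pow_unbounded_of_one_lt (4/ε) hb1
    set m := m0 + 1 with hmdef
    have hm : 0 < m := Nat.succ_pos m0
    have hB0 : (0:ℝ) < (b:ℝ)^m := by positivity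
    have hBge : (4:ℝ)/ε < (b:ℝ)^m := lt_of_lt_of_le hm0 (pow_le_pow_right₀ (by linarith) (by omega))
    have h4 : 4 < ε * (b:ℝ)^m := by
      rw [div_lt_iff₀ hε] at hBge
      linarith
    have hcastB : (((b:ℤ)^m : ℤ) : ℝ) = (b:ℝ)^m := by push_cast; rfl
    have hfloorB : ⌊((b:ℝ)^m : ℝ)⌋ = (b:ℤ)^m := by rw [← hcastB, Int.floor_intCast]
    have huB0 : 0 ≤ u * (b:ℝ)^m := mul_nonneg hu hB0.le
    have hvB : v * (b:ℝ)^m ≤ (b:ℝ)^m := by nlinarith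
    have huB : u * (b:ℝ)^m ≤ (b:ℝ)^m := by nlinarith
    set k1 : ℤ := ⌈u * (b:ℝ)^m⌉ with hk1
    set k2 : ℤ := max k1 ⌊v * (b:ℝ)^m⌋ with hk2
    set k1h : ℤ := ⌊u * (b:ℝ)^m⌋ with hk1h
    set k2h : ℤ := min (⌊v * (b:ℝ)^m⌋ + 1) ((b:ℤ)^m) with hk2h
    have c1 : 0 ≤ k1 := Int.ceil_nonneg huB0
    have c2 : k1 ≤ k2 := le_max_left _ _
    have c3 : k2 ≤ (b:ℤ)^m := by
      apply max_le
      · rw [hk1, Int.ceil_le, hcastB]; exact huB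
      · rw [← hfloorB]; exact Int.floor_le_floor hvB
    have d1 : 0 ≤ k1h := Int.floor_nonneg.mpr huB0
    have d2 : k1h ≤ k2h := by
      apply le_min
      · have h' : u * (b:ℝ)^m ≤ v * (b:ℝ)^m := by nlinarith
        have := Int.floor_le_floor h'
        omega
      · rw [hk1h, ← hfloorB]; exact Int.floor_le_floor huB
    have d3 : k2h ≤ (b:ℤ)^m := min_le_right _ _
    refine ⟨_, _, _, _, range_tendsto hb ξ hnorm hm c1 c2 c3,
      range_tendsto hb ξ hnorm hm d1 d2 d3, ?_, ?_, ?_, ?_⟩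
    · -- lower pointwise
      intro N
      apply div_le_div_nat
      have hmono : cnt (fun n => k1 ≤ ⌊Int.fract (ξ*(b:ℝ)^n) * (b:ℝ)^m⌋
          ∧ ⌊Int.fract (ξ*(b:ℝ)^n) * (b:ℝ)^m⌋ < k2) N
          ≤ cnt (fun n => u ≤ Int.fract (ξ * (b:ℝ)^n) ∧ Int.fract (ξ * (b:ℝ)^n) ≤ v) N := by
        apply cnt_mono
        intro n hn
        obtain ⟨ha, hb'⟩ := hn
        set y := Int.fract (ξ*(b:ℝ)^n) with hydef
        have hfl2 : ⌊y * (b:ℝ)^m⌋ < ⌊v * (b:ℝ)^m⌋ := by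
          rcases le_or_gt ⌊v * (b:ℝ)^m⌋ k1 with hcase | hcase
          · exfalso; rw [hk2, max_eq_left hcase] at hb'; omega
          · rw [hk2, max_eq_right hcase.le] at hb'; exact hb'
        constructor
        · have a1 : u * (b:ℝ)^m ≤ (k1:ℝ) := Int.le_ceil _
          have a2 : (k1:ℝ) ≤ (⌊y*(b:ℝ)^m⌋:ℝ) := by exact_mod_cast ha
          have a3 : (⌊y*(b:ℝ)^m⌋:ℝ) ≤ y*(b:ℝ)^m := Int.floor_le _
          nlinarith
        · have a1 : y * (b:ℝ)^m < (⌊y*(b:ℝ)^m⌋:ℝ) + 1 := Int.lt_floor_add_one _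
          have a2 : (⌊y*(b:ℝ)^m⌋:ℝ) + 1 ≤ (⌊v*(b:ℝ)^m⌋:ℝ) := by exact_mod_cast hfl2
          have a3 : (⌊v*(b:ℝ)^m⌋:ℝ) ≤ v * (b:ℝ)^m := Int.floor_le _
          nlinarith
      exact_mod_cast hmono
    · -- upper pointwise
      intro N
      apply div_le_div_nat
      have hmono : cnt (fun n => u ≤ Int.fract (ξ * (b:ℝ)^n) ∧ Int.fract (ξ * (b:ℝ)^n) ≤ v) N
          ≤ cnt (fun n => k1h ≤ ⌊Int.fract (ξ*(b:ℝ)^n) * (b:ℝ)^m⌋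
            ∧ ⌊Int.fract (ξ*(b:ℝ)^n) * (b:ℝ)^m⌋ < k2h) N := by
        apply cnt_mono
        intro n hn
        obtain ⟨ha, hb'⟩ := hn
        have hy1 : Int.fract (ξ*(b:ℝ)^n) < 1 := Int.fract_lt_one _
        have hy0 : 0 ≤ Int.fract (ξ*(b:ℝ)^n) := Int.fract_nonneg _
        constructor
        · exact Int.floor_le_floor (mul_le_mul_of_nonneg_right ha hB0.le)
        · apply lt_min
          · have := Int.floor_le_floor (mul_le_mul_of_nonneg_right hb' hB0.le)
            omega
          · rw [Int.floor_lt, hcastB]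
            nlinarith
      exact_mod_cast hmono
    · -- lower limit bound : v - u - ε < ↑(k2 - k1) / b^m
      rw [lt_div_iff₀ hB0, Int.cast_sub]
      have A1 : (k1:ℝ) < u * (b:ℝ)^m + 1 := Int.ceil_lt_add_one _
      have A2 : v * (b:ℝ)^m - 1 < (⌊v * (b:ℝ)^m⌋:ℝ) := Int.sub_one_lt_floor _
      have A3 : ((⌊v * (b:ℝ)^m⌋:ℤ):ℝ) ≤ (k2:ℝ) := by
        rw [hk2]
        exact_mod_cast le_max_right k1 ⌊v * (b:ℝ)^m⌋
      nlinarith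
    · -- upper limit bound : ↑(k2h - k1h) / b^m < v - u + ε
      rw [div_lt_iff₀ hB0, Int.cast_sub]
      have A1 : (k2h:ℝ) ≤ (⌊v * (b:ℝ)^m⌋:ℝ) + 1 := by
        have := min_le_left (⌊v * (b:ℝ)^m⌋ + 1) ((b:ℤ)^m)
        rw [← hk2h] at this
        exact_mod_cast this
      have A2 : (⌊v * (b:ℝ)^m⌋:ℝ) ≤ v * (b:ℝ)^m := Int.floor_le _
      have A3 : u * (b:ℝ)^m - 1 < (k1h:ℝ) := Int.sub_one_lt_floor _
      nlinarith
  · -- u.d. → normal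
    intro hud m hm w hw
    have hB0 : (0:ℝ) < (b:ℝ)^m := by positivity
    set w0 : ℕ → ℕ := fun j => if h : j < m then w ⟨j, h⟩ else 0 with hw0def
    have hw0b : ∀ j, w0 j < b := by
      intro j
      rw [hw0def]
      by_cases h : j < m
      · simp only [dif_pos h]; exact hw _
      · simp only [dif_neg h]; omega
    set c : ℕ := ∑ j ∈ Finset.range m, w0 j * b^(m-1-j) with hcdef
    have hcb : c < b^m := digits_lt hb m w0 (fun j _ => hw0b j)
    have hshow : Tendsto (fun N => (cnt (fun i => ∀ j : Fin m, digit b ξ (i+(j:ℕ)) = w j) N : ℝ)/N)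
        atTop (nhds (1/(b:ℝ)^m)) → Tendsto
      (fun N : ℕ => (((Finset.Icc 1 N).filter
        (fun i => ∀ j : Fin m, digit b ξ (i + (j : ℕ)) = w j)).card : ℝ) / N)
      atTop (nhds (1 / (b : ℝ) ^ m)) := by
      intro h
      apply h.congr
      intro N
      exact congrArg (· / (N:ℝ)) (cnt_cast_eq (fun n => Iff.rfl) N)
    apply hshow
    rw [tendsto_shift]
    have hiff : ∀ n, (∀ j : Fin m, digit b ξ (n+1+(j:ℕ)) = w j) ↔
        ⌊Int.fract (ξ*(b:ℝ)^n) * (b:ℝ)^m⌋ = (c:ℤ) := by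
      intro n
      have h1 : (∀ j : Fin m, digit b ξ (n+1+(j:ℕ)) = w j) ↔
          (∀ j, j < m → digit b ξ (n+1+j) = w0 j) := by
        constructor
        · intro h j hj
          rw [hw0def]
          simp only [dif_pos hj]
          exact h ⟨j, hj⟩
        · intro h j
          have := h (j:ℕ) j.2
          rw [hw0def] at this
          simp only [dif_pos j.2] at this
          simpa using this
      rw [h1, block_iff hb ξ m w0 hw0b n, ← hcdef]
    have hc1 : ((c:ℝ)+1)/(b:ℝ)^m ≤ 1 := by
      rw [div_le_one hB0]
      have h' : ((c:ℕ):ℝ) + 1 ≤ ((b^m : ℕ):ℝ) := by exact_mod_cast hcb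
      push_cast at h' ⊢
      linarith
    have hdiff : ((c:ℝ)+1)/(b:ℝ)^m - (c:ℝ)/(b:ℝ)^m = 1/(b:ℝ)^m := by
      rw [div_sub_div_same]
      norm_num
    have hgoal : Tendsto
        (fun N => (cnt (fun n => ⌊Int.fract (ξ*(b:ℝ)^n) * (b:ℝ)^m⌋ = (c:ℤ)) N : ℝ)/N)
        atTop (nhds (1/(b:ℝ)^m)) := by
      apply sandwich
      intro ε hε
      set δ : ℝ := min ε (1/(b:ℝ)^m) / 2 with hδdef
      have hmin0 : 0 < min ε (1/(b:ℝ)^m) := lt_min hε (by positivity)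
      have hδ0 : 0 < δ := by rw [hδdef]; linarith
      have hδB : δ < 1/(b:ℝ)^m := by
        have h1 : min ε (1/(b:ℝ)^m) ≤ 1/(b:ℝ)^m := min_le_right _ _
        have h2 : (0:ℝ) < 1/(b:ℝ)^m := by positivity
        rw [hδdef]; linarith
      have hδε : δ < ε := by
        have h1 : min ε (1/(b:ℝ)^m) ≤ ε := min_le_left _ _
        rw [hδdef]; linarith
      have hdlt : (c:ℝ)/(b:ℝ)^m < ((c:ℝ)+1)/(b:ℝ)^m - δ := by linarith
      have hg : Tendsto (fun N => (cnt (fun n => (c:ℝ)/(b:ℝ)^m ≤ Int.fract (ξ*(b:ℝ)^n)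
          ∧ Int.fract (ξ*(b:ℝ)^n) ≤ ((c:ℝ)+1)/(b:ℝ)^m - δ) N : ℝ)/N) atTop
          (nhds ((((c:ℝ)+1)/(b:ℝ)^m - δ) - (c:ℝ)/(b:ℝ)^m)) := by
        apply (hud ((c:ℝ)/(b:ℝ)^m) (((c:ℝ)+1)/(b:ℝ)^m - δ)
          (by positivity) hdlt (by linarith)).congr
        intro N
        exact (congrArg (· / (N:ℝ)) (cnt_cast_eq (fun n => Iff.rfl) N)).symm
      have hh : Tendsto (fun N => (cnt (fun n => (c:ℝ)/(b:ℝ)^m ≤ Int.fract (ξ*(b:ℝ)^n)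
          ∧ Int.fract (ξ*(b:ℝ)^n) ≤ ((c:ℝ)+1)/(b:ℝ)^m) N : ℝ)/N) atTop
          (nhds ((((c:ℝ)+1)/(b:ℝ)^m) - (c:ℝ)/(b:ℝ)^m)) := by
        apply (hud ((c:ℝ)/(b:ℝ)^m) (((c:ℝ)+1)/(b:ℝ)^m)
          (by positivity) (by linarith) hc1).congr
        intro N
        exact (congrArg (· / (N:ℝ)) (cnt_cast_eq (fun n => Iff.rfl) N)).symm
      refine ⟨_, _, _, _, hg, hh, ?_, ?_, ?_, ?_⟩
      · intro N
        apply div_le_div_nat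
        have hmono : cnt (fun n => (c:ℝ)/(b:ℝ)^m ≤ Int.fract (ξ*(b:ℝ)^n)
            ∧ Int.fract (ξ*(b:ℝ)^n) ≤ ((c:ℝ)+1)/(b:ℝ)^m - δ) N
            ≤ cnt (fun n => ⌊Int.fract (ξ*(b:ℝ)^n) * (b:ℝ)^m⌋ = (c:ℤ)) N := by
          apply cnt_mono
          intro n hn
          obtain ⟨ha, hb'⟩ := hn
          rw [Int.floor_eq_iff]
          constructor
          · push_cast
            rw [div_le_iff₀ hB0] at ha
            linarith
          · push_cast
            have h' : Int.fract (ξ*(b:ℝ)^n) < ((c:ℝ)+1)/(b:ℝ)^m := by linarith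
            rw [lt_div_iff₀ hB0] at h'
            linarith
        exact_mod_cast hmono
      · intro N
        apply div_le_div_nat
        have hmono : cnt (fun n => ⌊Int.fract (ξ*(b:ℝ)^n) * (b:ℝ)^m⌋ = (c:ℤ)) N
            ≤ cnt (fun n => (c:ℝ)/(b:ℝ)^m ≤ Int.fract (ξ*(b:ℝ)^n)
              ∧ Int.fract (ξ*(b:ℝ)^n) ≤ ((c:ℝ)+1)/(b:ℝ)^m) N := by
          apply cnt_mono
          intro n hn
          rw [Int.floor_eq_iff] at hn
          push_cast at hn
          constructor
          · rw [div_le_iff₀ hB0]; linarith [hn.1]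
          · rw [le_div_iff₀ hB0]; linarith [hn.2]
        exact_mod_cast hmono
      · linarith
      · linarith
    apply hgoal.congr
    intro N
    rw [cnt_congr hiff N]
end

section
/- If θ is a Pisot number, then the sequence of its powers tends to 0 modulo 1; that is, ‖θ^n‖ → 0 as n → ∞, where ‖x‖ denotes the distance from x to the nearest integer. -/
open IntermediateField Polynomial

lemma round_min (x : ℝ) (m : ℤ) : |x - round x| ≤ |x - m| := by
  rcases eq_or_ne m (round x) with h | h
  · rw [h]
  · have h1 : (1 : ℝ) ≤ |(round x : ℝ) - m| := by
      have : round x - m ≠ 0 := sub_ne_zero.mpr (Ne.symm h)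
      have := Int.one_le_abs this
      push_cast [← Int.cast_abs] at *
      exact_mod_cast this
    have h2 : |x - round x| ≤ 1 / 2 := abs_sub_round x
    have h3 : |(round x : ℝ) - m| ≤ |x - round x| + |x - m| := by
      calc |(round x : ℝ) - m| = |(round x - x) + (x - m)| := by ring_nf
        _ ≤ |round x - x| + |x - m| := abs_add_le _ _
        _ = |x - round x| + |x - m| := by rw [abs_sub_comm]
    linarith

set_option maxHeartbeats 1000000 in
/-- If `θ` is a Pisot number — a real algebraic integer `θ > 1` all of whose complex
conjugates other than `θ` itself have absolute value `< 1` — then the distance from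
`θ^n` to the nearest integer tends to `0`. -/
theorem pisot_powers_tendsto_zero_mod_one (θ : ℝ) (hθ : 1 < θ)
    (hint : IsIntegral ℤ θ)
    (hconj : ∀ z : ℂ, Polynomial.aeval z (minpoly ℚ θ) = 0 → z ≠ (θ : ℂ) →
      ‖z‖ < 1) :
    Filter.Tendsto (fun n : ℕ => |θ ^ n - (round (θ ^ n) : ℝ)|)
      Filter.atTop (nhds 0) := by
  classical
  have hintQ : IsIntegral ℚ θ := hint.tower_top
  set K := ℚ⟮θ⟯
  haveI : FiniteDimensional ℚ K := IntermediateField.adjoin.finiteDimensional hintQ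
  set g : K := IntermediateField.AdjoinSimple.gen ℚ θ with hg
  have hgmap : algebraMap K ℝ g = θ := IntermediateField.AdjoinSimple.algebraMap_gen ℚ θ
  have hgint : IsIntegral ℤ g := by
    refine IsIntegral.tower_bot (algebraMap K ℝ).injective ?_
    rwa [hgmap]
  -- the canonical embedding σ₀ : K →ₐ[ℚ] ℂ
  let σ₀ : K →ₐ[ℚ] ℂ := (Complex.ofRealHom.toRatAlgHom).comp (IsScalarTower.toAlgHom ℚ K ℝ)
  have hσ₀ : σ₀ g = (θ : ℂ) := by
    show Complex.ofRealHom (algebraMap K ℝ g) = (θ : ℂ)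
    rw [hgmap]; rfl
  -- every other embedding sends g to something of abs < 1
  have key : ∀ σ : K →ₐ[ℚ] ℂ, σ ≠ σ₀ → ‖σ g‖ < 1 := by
    intro σ hσ
    apply hconj
    · have : aeval g (minpoly ℚ θ) = 0 := IntermediateField.aeval_gen_minpoly ℚ θ
      have := congrArg σ this
      rwa [map_zero, ← Polynomial.aeval_algHom_apply] at this
    · intro hEq
      apply hσ
      apply (IntermediateField.adjoin.powerBasis hintQ).algHom_ext
      rw [IntermediateField.adjoin.powerBasis_gen]
      rw [show IntermediateField.AdjoinSimple.gen ℚ θ = g from rfl]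
      exact hEq.trans hσ₀.symm
  -- trace of g^n is an integer
  have htr : ∀ n : ℕ, ∃ m : ℤ, (m : ℚ) = Algebra.trace ℚ K (g ^ n) := by
    intro n
    have : IsIntegral ℤ (Algebra.trace ℚ K (g ^ n)) :=
      Algebra.isIntegral_trace (hgint.pow n)
    exact IsIntegrallyClosed.isIntegral_iff.mp this
  -- trace formula
  have htrace : ∀ n : ℕ, (algebraMap ℚ ℂ) (Algebra.trace ℚ K (g ^ n)) =
      ∑ σ : K →ₐ[ℚ] ℂ, (σ g) ^ n := by
    intro n
    rw [trace_eq_sum_embeddings (E := ℂ)]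
    exact Finset.sum_congr rfl fun σ _ => map_pow σ g n
  -- bound
  set f : ℕ → ℝ := fun n => ∑ σ ∈ Finset.univ.erase σ₀, (‖σ g‖) ^ n with hf
  have hbound : ∀ n : ℕ, |θ ^ n - (round (θ ^ n) : ℝ)| ≤ f n := by
    intro n
    obtain ⟨m, hm⟩ := htr n
    have hsum := htrace n
    have hsplit : (algebraMap ℚ ℂ) (Algebra.trace ℚ K (g ^ n))
        = (θ : ℂ) ^ n + ∑ σ ∈ Finset.univ.erase σ₀, (σ g) ^ n := by
      rw [hsum, ← hσ₀]
      exact (Finset.add_sum_erase _ (fun σ => (σ g)^n) (Finset.mem_univ σ₀)).symm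
    have h1 : |θ ^ n - (m : ℝ)| ≤ f n := by
      have hc : ((θ ^ n - (m : ℝ) : ℝ) : ℂ) = -∑ σ ∈ Finset.univ.erase σ₀, (σ g) ^ n := by
        rw [← hm, map_intCast] at hsplit
        push_cast at hsplit ⊢
        linear_combination -hsplit
      have : ‖((θ ^ n - (m : ℝ) : ℝ) : ℂ)‖ ≤ f n := by
        rw [hc, norm_neg]
        calc ‖∑ σ ∈ Finset.univ.erase σ₀, (σ g) ^ n‖
            ≤ ∑ σ ∈ Finset.univ.erase σ₀, ‖(σ g) ^ n‖ :=
              norm_sum_le _ _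
          _ = f n := Finset.sum_congr rfl fun σ _ => norm_pow _ n
      rwa [Complex.norm_real, Real.norm_eq_abs] at this
    exact le_trans (round_min _ m) h1
  have hf0 : Filter.Tendsto f Filter.atTop (nhds 0) := by
    rw [hf]
    have : (0 : ℝ) = ∑ σ ∈ Finset.univ.erase σ₀, (0 : ℝ) := by simp
    rw [this]
    refine tendsto_finset_sum _ fun σ hσ => ?_
    refine tendsto_pow_atTop_nhds_zero_of_lt_one (norm_nonneg _) ?_
    exact key σ (Finset.ne_of_mem_erase hσ)
  exact squeeze_zero (fun n => abs_nonneg _) hbound hf0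
end

section
/- Let b ≥ 2 be an integer and let ξ be an irrational real number. Then the fractional parts {ξ b^n}, n ≥ 0, cannot all lie in an interval of length strictly less than 1/b; that is, there is no real u and no ℓ < 1/b such that u ≤ {ξ b^n} ≤ u + ℓ for all n ≥ 0. -/
/-- For an integer `b ≥ 2` and an irrational `ξ`, the fractional parts `{ξ b^n}`, `n ≥ 0`,
cannot all lie in an interval of length strictly less than `1/b`. -/
theorem fract_mul_pow_not_in_short_interval (b : ℕ) (hb : 2 ≤ b) (ξ : ℝ)
    (hirr : Irrational ξ) :
    ¬ ∃ (u ℓ : ℝ), ℓ < 1 / b ∧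
      ∀ n : ℕ, u ≤ Int.fract (ξ * (b : ℝ) ^ n) ∧ Int.fract (ξ * (b : ℝ) ^ n) ≤ u + ℓ := by
  rintro ⟨u, ℓ, hℓ, h⟩
  have hb2 : (2:ℝ) ≤ (b:ℝ) := by exact_mod_cast hb
  have hbpos : (0:ℝ) < (b:ℝ) := by linarith
  set x : ℕ → ℝ := fun n => Int.fract (ξ * (b : ℝ) ^ n) with hxdef
  set a : ℕ → ℤ := fun n => ⌊(b:ℝ) * x n⌋ with hadef
  have hl0 : 0 ≤ ℓ := by linarith [(h 0).1, (h 0).2]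
  have hbl : (b:ℝ) * ℓ < 1 := by
    have := (lt_div_iff₀ hbpos).mp hℓ; linarith
  have hl1 : ℓ < 1 := by nlinarith
  -- the recurrence
  have hrec : ∀ n, x (n+1) = (b:ℝ) * x n - (a n : ℝ) := by
    intro n
    have hxn : x n = ξ * (b:ℝ)^n - (⌊ξ * (b:ℝ)^n⌋ : ℝ) := rfl
    have e1 : ξ * (b:ℝ)^(n+1) = ((⌊ξ * (b:ℝ)^n⌋ * (b:ℤ) : ℤ) : ℝ) + (b:ℝ) * x n := by
      rw [hxn]; push_cast; ring
    have e2 : x (n+1) = Int.fract ((b:ℝ) * x n) := by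
      simp only [hxdef]
      rw [e1, Int.fract_intCast_add]
    rw [e2]; rfl
  -- two-valuedness of the digits
  set c : ℤ := ⌊(b:ℝ) * u⌋ with hcdef
  have hc : ∀ n, c ≤ a n ∧ a n ≤ c + 1 := by
    intro n
    have hxn1 : u ≤ x n := (h n).1
    have hxn2 : x n ≤ u + ℓ := (h n).2
    constructor
    · apply Int.le_floor.mpr
      calc (c:ℝ) ≤ (b:ℝ) * u := Int.floor_le _
        _ ≤ (b:ℝ) * x n := by nlinarith
    · have : a n < c + 2 := by
        apply Int.floor_lt.mpr
        have h1 : (b:ℝ) * x n ≤ (b:ℝ) * u + (b:ℝ) * ℓ := by nlinarith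
        have h2 : (b:ℝ) * u < (c:ℝ) + 1 := Int.lt_floor_add_one _
        push_cast
        linarith
      omega
  -- dichotomy
  by_cases hQ : ∀ k, ∃ n m, (∀ i, 1 ≤ i → i ≤ k → a (n+i) = a (m+i)) ∧ a n ≠ a m
  · -- Case A: arbitrarily long matching after a disagreement
    obtain ⟨k, hk⟩ := exists_pow_lt_of_lt_one
      (show (0:ℝ) < 1 - (b:ℝ)*ℓ by linarith)
      (show 1/(b:ℝ) < 1 by rw [div_lt_one hbpos]; linarith)
    obtain ⟨n, m, hmatch, hne⟩ := hQ k
    have main : ∀ n' m', (∀ i, 1 ≤ i → i ≤ k → a (n'+i) = a (m'+i)) →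
        a n' = a m' + 1 → False := by
      intro n' m' hmatch' hdig
      set d : ℕ → ℝ := fun i => x (n'+i) - x (m'+i) with hd
      have hdrec : ∀ i, d (i+1) = (b:ℝ) * d i - ((a (n'+i) : ℝ) - (a (m'+i) : ℝ)) := by
        intro i
        simp only [hd]
        rw [show n' + (i+1) = (n'+i)+1 by omega, show m' + (i+1) = (m'+i)+1 by omega,
          hrec, hrec]
        ring
      have hgrow : ∀ i, i ≤ k → d (1+i) = (b:ℝ)^i * d 1 := by
        intro i hik
        induction i with
        | zero => simp
        | succ i ih =>
          have h1 : d (1+(i+1)) = (b:ℝ) * d (1+i) - ((a (n'+(1+i)) : ℝ) - (a (m'+(1+i)) : ℝ)) := by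
            rw [show 1+(i+1) = (1+i)+1 by omega]; exact hdrec (1+i)
          rw [h1, hmatch' (1+i) (by omega) (by omega), ih (by omega)]
          ring
      have hbd : ∀ i, |d i| ≤ ℓ := by
        intro i
        simp only [hd]
        rw [abs_le]
        constructor <;> linarith [(h (n'+i)).1, (h (n'+i)).2, (h (m'+i)).1, (h (m'+i)).2]
      have hd1 : d 1 = (b:ℝ) * d 0 - 1 := by
        have h0 := hdrec 0
        simp only [Nat.add_zero] at h0
        rw [hdig] at h0
        push_cast at h0
        simpa using h0
      have h1 : (b:ℝ)^k * |d 1| ≤ ℓ := by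
        have hh := hbd (1+k)
        rw [hgrow k le_rfl, abs_mul, abs_of_nonneg (pow_nonneg (le_of_lt hbpos) k)] at hh
        exact hh
      have hpk : (0:ℝ) < (b:ℝ)^k := pow_pos hbpos k
      have h3 : 1 - (b:ℝ) * d 0 ≤ |d 1| := by
        rw [hd1]
        linarith [neg_le_abs ((b:ℝ) * d 0 - 1)]
      have h4 : d 0 ≤ ℓ := le_trans (le_abs_self _) (hbd 0)
      have hk' : 1 < (1 - (b:ℝ)*ℓ) * (b:ℝ)^k := by
        rw [div_pow, one_pow, div_lt_iff₀ hpk] at hk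
        linarith
      have hA : (b:ℝ)^k * (1 - (b:ℝ) * d 0) ≤ ℓ :=
        le_trans (mul_le_mul_of_nonneg_left h3 (le_of_lt hpk)) h1
      nlinarith [mul_le_mul_of_nonneg_left h4 (mul_pos hpk hbpos).le, hl1, hA, hk']
    have hcn := hc n
    have hcm := hc m
    rcases (show a n = a m + 1 ∨ a m = a n + 1 by omega) with hcase | hcase
    · exact main n m hmatch hcase
    · exact main m n (fun i h1 h2 => (hmatch i h1 h2).symm) hcase
  · -- Case B: some window determines the previous digit
    push_neg at hQ
    obtain ⟨k, HB⟩ := hQ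
    set K := k + 1 with hK
    have HBK : ∀ n m, (∀ i, 1 ≤ i → i ≤ K → a (n+i) = a (m+i)) → a n = a m := by
      intro n m hm
      exact HB n m (fun i h1 h2 => hm i h1 (by omega))
    have claim : ∃ p q, p < q ∧ ∀ i, a (p + i) = a (q + i) := by
      by_contra hC
      push_neg at hC
      have aeq : ∀ {s t : ℕ}, s = t → a s = a t := fun hst => by rw [hst]
      -- one-step forward propagation of window disagreement
      have step : ∀ p q j, (∃ i, i < K ∧ a (p + j + i) ≠ a (q + j + i)) →
          ∃ i, i < K ∧ a (p + (j+1) + i) ≠ a (q + (j+1) + i) := by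
        intro p q j hj
        by_contra hno
        push_neg at hno
        have h0 : a (p+j) = a (q+j) := by
          apply HBK (p+j) (q+j)
          intro i h1 h2
          have hstep := hno (i-1) (by omega)
          calc a (p + j + i) = a (p + (j+1) + (i-1)) := aeq (by omega)
            _ = a (q + (j+1) + (i-1)) := hstep
            _ = a (q + j + i) := aeq (by omega)
        obtain ⟨i, hiK, hne⟩ := hj
        rcases Nat.eq_zero_or_pos i with h0i | h1i
        · subst h0i
          exact hne (by
            calc a (p + j + 0) = a (p + j) := aeq (by omega)
              _ = a (q + j) := h0
              _ = a (q + j + 0) := aeq (by omega))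
        · exact hne (by
            calc a (p + j + i) = a (p + (j+1) + (i-1)) := aeq (by omega)
              _ = a (q + (j+1) + (i-1)) := hno (i-1) (by omega)
              _ = a (q + j + i) := aeq (by omega))
      have propa : ∀ p q j₀, (∃ i, i < K ∧ a (p + j₀ + i) ≠ a (q + j₀ + i)) →
          ∀ j, j₀ ≤ j → ∃ i, i < K ∧ a (p + j + i) ≠ a (q + j + i) := by
        intro p q j₀ h0 j hj
        induction j, hj using Nat.le_induction with
        | base => exact h0
        | succ j hj ih => exact step p q j ih
      have hC' : ∀ p q : ℕ, ∃ i, p < q → a (p + i) ≠ a (q + i) := by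
        intro p q
        by_cases hpq : p < q
        · exact (hC p q hpq).imp (fun i hi _ => hi)
        · exact ⟨0, fun hh => absurd hh hpq⟩
      choose i0 hi0 using hC'
      set R := 2^K with hR
      set s : Finset (ℕ × ℕ) := Finset.range (R+1) ×ˢ Finset.range (R+1) with hs
      set J := s.sup (fun pq => i0 pq.1 pq.2) with hJ
      have hdiff : ∀ p q, p < q → q ≤ R → ∃ i, i < K ∧ a (p + J + i) ≠ a (q + J + i) := by
        intro p q hpq hqR
        apply propa p q (i0 p q) _ J _
        · refine ⟨0, by omega, ?_⟩
          have hne0 := hi0 p q hpq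
          calc a (p + i0 p q + 0) = a (p + i0 p q) := aeq (by omega)
            _ ≠ a (q + i0 p q) := hne0
            _ = a (q + i0 p q + 0) := aeq (by omega)
        · have hmem : (p, q) ∈ s := by
            simp only [hs, Finset.mem_product, Finset.mem_range]
            omega
          exact Finset.le_sup (f := fun pq : ℕ × ℕ => i0 pq.1 pq.2) hmem
      have key : ∀ p' q' : ℕ, p' < q' → q' ≤ R →
          (∀ i : Fin K, decide (a (p' + J + i.val) = c) = decide (a (q' + J + i.val) = c)) →
          False := by
        intro p' q' h1 h2 hfe
        obtain ⟨i, hiK, hne'⟩ := hdiff p' q' h1 h2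
        have hfi := hfe ⟨i, hiK⟩
        have hiff : (a (p' + J + i) = c) ↔ (a (q' + J + i) = c) := by
          simpa [decide_eq_decide] using hfi
        have hcp := hc (p' + J + i)
        have hcq := hc (q' + J + i)
        omega
      have hfinj : Function.Injective
          (fun p : Fin (R+1) => fun i : Fin K => decide (a (p.val + J + i.val) = c)) := by
        intro p q hpq
        by_contra hne
        have hval : p.val < q.val ∨ q.val < p.val := by
          rcases Nat.lt_trichotomy p.val q.val with h' | h' | h'
          · exact Or.inl h'
          · exact absurd (Fin.ext h') hne
          · exact Or.inr h'
        rcases hval with h' | h'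
        · exact key p.val q.val h' (by omega) (fun i => congrFun hpq i)
        · exact key q.val p.val h' (by omega) (fun i => (congrFun hpq i).symm)
      have hcard := Fintype.card_le_of_injective _ hfinj
      simp only [Fintype.card_fin, Fintype.card_fun, Fintype.card_bool] at hcard
      omega
    obtain ⟨p, q, hpq, hag⟩ := claim
    have hD : ∀ j, x (p+j) - x (q+j) = (b:ℝ)^j * (x p - x q) := by
      intro j
      induction j with
      | zero => simp
      | succ j ih =>
        rw [show p + (j+1) = (p+j)+1 by omega, show q + (j+1) = (q+j)+1 by omega,
          hrec, hrec, hag j]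
        rw [pow_succ]
        nlinarith [ih]
    have hxeq : x p = x q := by
      by_contra hne
      have habs : 0 < |x p - x q| := abs_pos.mpr (sub_ne_zero.mpr hne)
      obtain ⟨j, hj⟩ := pow_unbounded_of_one_lt ((1:ℝ)/|x p - x q|) (show (1:ℝ) < b by linarith)
      have hgt : 1 < (b:ℝ)^j * |x p - x q| := by
        rw [div_lt_iff₀ habs] at hj
        linarith
      have hb1 : |x (p+j) - x (q+j)| ≤ ℓ := by
        rw [abs_le]
        constructor <;> linarith [(h (p+j)).1, (h (p+j)).2, (h (q+j)).1, (h (q+j)).2]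
      rw [hD j, abs_mul, abs_of_nonneg (pow_nonneg (le_of_lt hbpos) j)] at hb1
      linarith
    have hz : ξ * (((b:ℤ)^q - (b:ℤ)^p : ℤ) : ℝ) = ((⌊ξ * (b:ℝ)^q⌋ - ⌊ξ * (b:ℝ)^p⌋ : ℤ) : ℝ) := by
      have e : x p = ξ * (b:ℝ)^p - (⌊ξ * (b:ℝ)^p⌋ : ℝ) := rfl
      have e' : x q = ξ * (b:ℝ)^q - (⌊ξ * (b:ℝ)^q⌋ : ℝ) := rfl
      rw [e, e'] at hxeq
      push_cast
      linarith
    have hw : ((b:ℤ)^q - (b:ℤ)^p) ≠ 0 := by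
      have hlt : (b:ℤ)^p < (b:ℤ)^q := by
        apply pow_lt_pow_right₀ (by exact_mod_cast (by omega : 1 < b)) hpq
      omega
    exact (hirr.mul_intCast hw).ne_int _ hz
end

section
/- Let b ∈ (1,2) be a real number and let (a_n)_{n≥1} be a sequence with values in {0,1} such that ∑_{n≥1} a_n b^{-n} = 1. Then (a_n) is the unique sequence with values in {0,1} whose associated series ∑ a_n b^{-n} equals 1 (i.e., b is univoque) if and only if for every k > 0 the strict lexicographic inequalities (1−a_n)_{n≥1} < (a_{n+k})_{n≥1} < (a_n)_{n≥1} hold, where < is the lexicographic order on binary sequences. -/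
open Finset

/-- Strict lexicographic order on sequences: `x < y` iff they agree before some index `n`
and `x n < y n`. -/
def LexLt (x y : ℕ → ℕ) : Prop :=
  ∃ n : ℕ, (∀ m < n, x m = y m) ∧ x n < y n

section EJKAux

/-- value of the tail of a binary expansion after position `k`. -/
noncomputable def tv (b : ℝ) (d : ℕ → ℕ) (k : ℕ) : ℝ :=
  ∑' j : ℕ, (d (k + j + 1) : ℝ) / b ^ (j + 1)

lemma tv_summable {b : ℝ} (hb1 : 1 < b) {d : ℕ → ℕ} (hd : ∀ n, 1 ≤ n → d n ≤ 1) (k : ℕ) :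
    Summable (fun j : ℕ => (d (k + j + 1) : ℝ) / b ^ (j + 1)) := by
  have hb0 : (0:ℝ) < b := lt_trans one_pos hb1
  have hg : Summable (fun j : ℕ => (b⁻¹) ^ j) :=
    summable_geometric_of_lt_one (by positivity) (inv_lt_one_of_one_lt₀ hb1)
  refine Summable.of_nonneg_of_le (fun j => by positivity) (fun j => ?_) hg
  have h1 : (d (k + j + 1) : ℝ) ≤ 1 := by exact_mod_cast hd _ (by omega)
  calc (d (k + j + 1) : ℝ) / b ^ (j + 1) ≤ 1 / b ^ j :=
        div_le_div₀ (by norm_num) h1 (by positivity) (pow_le_pow_right₀ hb1.le (by omega))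
    _ = (b⁻¹) ^ j := by rw [one_div, inv_pow]

lemma tv_nonneg {b : ℝ} (hb1 : 1 < b) (d : ℕ → ℕ) (k : ℕ) : 0 ≤ tv b d k :=
  tsum_nonneg fun j => by positivity

lemma tv_peel {b : ℝ} (hb1 : 1 < b) {d : ℕ → ℕ} (hd : ∀ n, 1 ≤ n → d n ≤ 1) (k : ℕ) :
    tv b d k = (d (k + 1) : ℝ) / b + tv b d (k + 1) / b := by
  have hb0 : (0:ℝ) < b := lt_trans one_pos hb1
  have hs := tv_summable hb1 hd k
  rw [tv, Summable.tsum_eq_zero_add hs]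
  have h1 : ∀ j : ℕ, (d (k + (j+1) + 1) : ℝ) / b ^ (j + 1 + 1)
      = ((d ((k+1) + j + 1) : ℝ) / b ^ (j + 1)) * b⁻¹ := by
    intro j
    have : k + (j+1) + 1 = (k+1) + j + 1 := by omega
    rw [this]
    rw [pow_succ]
    field_simp
  rw [tsum_congr h1, tsum_mul_right]
  rw [tv]
  rw [pow_one, div_eq_mul_inv _ b, div_eq_mul_inv _ b]

lemma tv_unfold {b : ℝ} (hb1 : 1 < b) {d : ℕ → ℕ} (hd : ∀ n, 1 ≤ n → d n ≤ 1) (k m : ℕ) :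
    tv b d k = (∑ j ∈ Finset.range m, (d (k + j + 1) : ℝ) / b ^ (j + 1))
      + tv b d (k + m) / b ^ m := by
  have hb0 : (0:ℝ) < b := lt_trans one_pos hb1
  induction m with
  | zero => simp
  | succ m ih =>
    rw [ih, Finset.sum_range_succ, tv_peel hb1 hd (k+m)]
    have h1 : k + m + 1 = k + (m+1) := by omega
    rw [h1]
    have h2 : (0:ℝ) < b ^ m := by positivity
    field_simp
    ring

lemma geom_tsum {b : ℝ} (hb1 : 1 < b) : ∑' j : ℕ, (1:ℝ) / b ^ (j + 1) = 1 / (b - 1) := by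
  have hb0 : (0:ℝ) < b := lt_trans one_pos hb1
  have h1 : ∀ j : ℕ, (1:ℝ) / b ^ (j + 1) = (b⁻¹) ^ j * b⁻¹ := by
    intro j; rw [pow_succ]; field_simp
    rw [← mul_pow, mul_one_div_cancel hb0.ne', one_pow]
  rw [tsum_congr h1, tsum_mul_right,
    tsum_geometric_of_lt_one (by positivity) (inv_lt_one_of_one_lt₀ hb1)]
  rw [one_div, ← mul_inv]
  congr 1
  have hbne : b ≠ 0 := by linarith
  field_simp

lemma tv_le {b : ℝ} (hb1 : 1 < b) {d : ℕ → ℕ} (hd : ∀ n, 1 ≤ n → d n ≤ 1) (k : ℕ) :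
    tv b d k ≤ 1 / (b - 1) := by
  have hb0 : (0:ℝ) < b := lt_trans one_pos hb1
  rw [← geom_tsum hb1]
  apply Summable.tsum_le_tsum _ (tv_summable hb1 hd k)
  · exact (tv_summable hb1 (d := fun _ => 1) (fun n _ => le_refl 1) k).congr (by intro j; norm_num)
  · intro j
    have h1 : (d (k + j + 1) : ℝ) ≤ 1 := by exact_mod_cast hd _ (by omega)
    exact div_le_div_of_nonneg_right h1 (by positivity) |>.trans_eq rfl

lemma geom_finsum {b : ℝ} (hb1 : 1 < b) (m : ℕ) :
    ∑ j ∈ Finset.range m, (1:ℝ) / b ^ (j + 1) = 1 / (b - 1) - (1 / (b - 1)) / b ^ m := by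
  have hb0 : (0:ℝ) < b := lt_trans one_pos hb1
  have hb1' : b - 1 ≠ 0 := by linarith
  induction m with
  | zero => simp
  | succ m ih =>
    rw [Finset.sum_range_succ, ih]
    have h2 : (0:ℝ) < b ^ m := by positivity
    field_simp
    ring

/-- greedy algorithm: remainders -/
noncomputable def gr (b x : ℝ) : ℕ → ℝ
  | 0 => x
  | n + 1 => if 1 ≤ b * gr b x n then b * gr b x n - 1 else b * gr b x n

/-- greedy algorithm: digits -/
noncomputable def ge (b x : ℝ) (n : ℕ) : ℕ := if 1 ≤ b * gr b x n then 1 else 0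

lemma gr_succ (b x : ℝ) (n : ℕ) : gr b x (n + 1) = b * gr b x n - ge b x n := by
  rw [gr, ge]
  split <;> simp

/-- every number in `[0, 1/(b-1)]` has a binary expansion in base `b ∈ (1,2)`. -/
lemma greedy {b : ℝ} (hb1 : 1 < b) (hb2 : b < 2) {x : ℝ} (hx0 : 0 ≤ x)
    (hx1 : x ≤ 1 / (b - 1)) :
    ∃ ε : ℕ → ℕ, (∀ n, ε n = 0 ∨ ε n = 1) ∧ ∑' j : ℕ, (ε j : ℝ) / b ^ (j + 1) = x := by
  have hb0 : (0:ℝ) < b := lt_trans one_pos hb1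
  have hC : (1:ℝ) ≤ 1 / (b - 1) := by
    rw [le_div_iff₀ (by linarith)]; linarith
  have hinv : ∀ n, 0 ≤ gr b x n ∧ gr b x n ≤ 1 / (b - 1) := by
    intro n
    induction n with
    | zero => exact ⟨hx0, hx1⟩
    | succ n ih =>
      rw [gr]
      split
      next h =>
        constructor
        · linarith
        · have : b * gr b x n ≤ b / (b - 1) := by
            apply mul_le_mul_of_nonneg_left ih.2 hb0.le |>.trans_eq
            rw [mul_one_div]
          have h2 : b / (b-1) - 1 = 1 / (b - 1) := by
            rw [eq_div_iff (show b-1 ≠ 0 by linarith), sub_mul,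
              div_mul_cancel₀ _ (show b-1 ≠ 0 by linarith)]
            ring
          linarith
      next h =>
        push_neg at h
        constructor
        · exact mul_nonneg hb0.le ih.1
        · linarith
  have hε : ∀ n, ge b x n = 0 ∨ ge b x n = 1 := by
    intro n; rw [ge]; split <;> simp
  refine ⟨ge b x, hε, ?_⟩
  have hpart : ∀ n, ∑ j ∈ Finset.range n, (ge b x j : ℝ) / b ^ (j + 1)
      = x - gr b x n / b ^ n := by
    intro n
    induction n with
    | zero => simp [gr]
    | succ n ih =>
      rw [Finset.sum_range_succ, ih, gr_succ]
      have h2 : (0:ℝ) < b ^ n := by positivity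
      field_simp
      ring
  have hs : Summable (fun j : ℕ => (ge b x j : ℝ) / b ^ (j + 1)) := by
    have hg : Summable (fun j : ℕ => (b⁻¹) ^ j) :=
      summable_geometric_of_lt_one (by positivity) (inv_lt_one_of_one_lt₀ hb1)
    refine Summable.of_nonneg_of_le (fun j => by positivity) (fun j => ?_) hg
    have h1 : (ge b x j : ℝ) ≤ 1 := by
      rcases hε j with h | h <;> simp [h]
    calc (ge b x j : ℝ) / b ^ (j + 1) ≤ 1 / b ^ j :=
          div_le_div₀ (by norm_num) h1 (by positivity) (pow_le_pow_right₀ hb1.le (by omega))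
      _ = (b⁻¹) ^ j := by rw [one_div, inv_pow]
  have hlim1 : Filter.Tendsto (fun n => ∑ j ∈ Finset.range n, (ge b x j : ℝ) / b ^ (j + 1))
      Filter.atTop (nhds (∑' j : ℕ, (ge b x j : ℝ) / b ^ (j + 1))) :=
    hs.hasSum.tendsto_sum_nat
  have hlim2 : Filter.Tendsto (fun n => ∑ j ∈ Finset.range n, (ge b x j : ℝ) / b ^ (j + 1))
      Filter.atTop (nhds x) := by
    have h0 : Filter.Tendsto (fun n : ℕ => gr b x n / b ^ n) Filter.atTop (nhds 0) := by
      have hgeo : Filter.Tendsto (fun n : ℕ => (1 / (b-1)) * (b⁻¹) ^ n) Filter.atTop (nhds 0) := by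
        have := tendsto_pow_atTop_nhds_zero_of_lt_one (r := b⁻¹) (by positivity)
          (inv_lt_one_of_one_lt₀ hb1)
        simpa using this.const_mul (1 / (b-1))
      apply squeeze_zero (fun n => div_nonneg (hinv n).1 (by positivity)) _ hgeo
      intro n
      have h2 : (0:ℝ) < b ^ n := by positivity
      rw [div_le_iff₀ h2]
      calc gr b x n ≤ 1/(b-1) := (hinv n).2
        _ = 1 / (b - 1) * b⁻¹ ^ n * b ^ n := by
            rw [mul_assoc, inv_pow, inv_mul_cancel₀ (by positivity)]; ring
    have : (fun n => ∑ j ∈ Finset.range n, (ge b x j : ℝ) / b ^ (j + 1))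
        = fun n => x - gr b x n / b ^ n := funext hpart
    rw [this]
    simpa using (tendsto_const_nhds (x := x)).sub h0
  exact tendsto_nhds_unique hlim1 hlim2

/-- the iteration blow-up lemma -/
lemma blowup {b : ℝ} (hb1 : 1 < b) (F D : ℕ → ℝ) (C : ℝ) (hFC : ∀ k, F k ≤ C)
    (hrec : ∀ k, 1 ≤ k → ∃ m, 1 ≤ m ∧ 0 < D m ∧ F (k + m) = b ^ m * (F k - 1) + 1 + D m) :
    ∀ k, 1 ≤ k → F k < 1 := by
  by_contra hcon
  push_neg at hcon
  obtain ⟨k₀, hk₀, hFk₀⟩ := hcon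
  have hb0 : (0:ℝ) < b := lt_trans one_pos hb1
  have hrec' : ∀ k, ∃ m, 1 ≤ k → (1 ≤ m ∧ 0 < D m ∧ F (k + m) = b ^ m * (F k - 1) + 1 + D m) := by
    intro k
    by_cases h : 1 ≤ k
    · obtain ⟨m, hm⟩ := hrec k h
      exact ⟨m, fun _ => hm⟩
    · exact ⟨0, fun hh => absurd hh h⟩
  choose m hm using hrec'
  set K : ℕ → ℕ := fun t => Nat.rec (k₀ + m k₀) (fun _ kt => kt + m kt) t with hK
  have hK0 : K 0 = k₀ + m k₀ := rfl
  have hKs : ∀ t, K (t + 1) = K t + m (K t) := fun t => rfl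
  have hK1 : ∀ t, 1 ≤ K t := by
    intro t
    induction t with
    | zero => rw [hK0]; omega
    | succ t ih => rw [hKs]; omega
  obtain ⟨hm1, hD0, heq0⟩ := hm k₀ hk₀
  set ε := D (m k₀) with hε
  have key : ∀ t, 1 + b ^ t * ε ≤ F (K t) := by
    intro t
    induction t with
    | zero =>
      rw [hK0, heq0, pow_zero, one_mul]
      have : 0 ≤ b ^ (m k₀) * (F k₀ - 1) := by
        apply mul_nonneg (by positivity); linarith
      linarith
    | succ t ih =>
      obtain ⟨hm1', hD0', heq'⟩ := hm (K t) (hK1 t)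
      rw [hKs, heq']
      have h1 : b ≤ b ^ (m (K t)) := by
        calc b = b ^ 1 := (pow_one b).symm
          _ ≤ b ^ (m (K t)) := pow_le_pow_right₀ hb1.le hm1'
      have h2 : 0 < b ^ t * ε := by positivity
      have h3 : b * (b ^ t * ε) ≤ b ^ (m (K t)) * (F (K t) - 1) := by
        apply mul_le_mul h1 (by linarith) (by positivity) (by positivity)
      calc 1 + b ^ (t+1) * ε = 1 + b * (b ^ t * ε) := by ring
        _ ≤ 1 + b ^ (m (K t)) * (F (K t) - 1) := by linarith
        _ ≤ _ := by linarith
  obtain ⟨t, ht⟩ := pow_unbounded_of_one_lt ((C - 1) / ε) hb1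
  have h4 : C - 1 < b ^ t * ε := by
    rw [div_lt_iff₀ hD0] at ht
    linarith [ht]
  have := key t
  have := hFC (K t)
  linarith

end EJKAux

/-- For `b ∈ (1,2)` and a binary expansion `(a_n)_{n≥1}` of `1` in base `b`, this expansion
is the unique one (i.e. `b` is univoque) iff for every `k > 0` the strict lexicographic
inequalities `(1 - a_n)_{n≥1} < (a_{n+k})_{n≥1} < (a_n)_{n≥1}` hold. -/
theorem univoque_iff_lex (b : ℝ) (hb1 : 1 < b) (hb2 : b < 2) (a : ℕ → ℕ)
    (ha : ∀ n : ℕ, 1 ≤ n → a n = 0 ∨ a n = 1)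
    (hsum : ∑' n : ℕ, (a (n + 1) : ℝ) / b ^ (n + 1) = 1) :
    (∀ c : ℕ → ℕ, (∀ n : ℕ, 1 ≤ n → c n = 0 ∨ c n = 1) →
        ∑' n : ℕ, (c (n + 1) : ℝ) / b ^ (n + 1) = 1 →
        ∀ n : ℕ, 1 ≤ n → c n = a n) ↔
      ∀ k : ℕ, 0 < k →
        LexLt (fun n => 1 - a (n + 1)) (fun n => a (n + 1 + k)) ∧
        LexLt (fun n => a (n + 1 + k)) (fun n => a (n + 1)) := by
  classical
  have hb0 : (0:ℝ) < b := lt_trans one_pos hb1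
  have hbne : b ≠ 0 := ne_of_gt hb0
  have ha' : ∀ n, 1 ≤ n → a n ≤ 1 := fun n hn => by rcases ha n hn with h | h <;> omega
  set C₀ : ℝ := 1 / (b - 1) with hC₀def
  have hC₀1 : 1 < C₀ := by
    rw [hC₀def, lt_div_iff₀ (by linarith)]; linarith
  have hC₀b : C₀ * b = C₀ + 1 := by
    rw [hC₀def, div_add' _ _ _ (show b - 1 ≠ 0 by linarith), one_div_mul_eq_div]
    congr 1
    ring
  -- basic facts about the tail values of `a`
  have hfnn : ∀ k, 0 ≤ tv b a k := tv_nonneg hb1 a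
  have hfle : ∀ k, tv b a k ≤ C₀ := fun k => tv_le hb1 ha' k
  have hpeel : ∀ k, tv b a k = (a (k+1) : ℝ) / b + tv b a (k+1) / b := tv_peel hb1 ha'
  have hf0 : tv b a 0 = 1 := by
    rw [tv, ← hsum]
    apply tsum_congr
    intro j
    simp only [Nat.zero_add]
  have hunf0 : ∀ m, (1:ℝ) = (∑ j ∈ Finset.range m, (a (j+1) : ℝ) / b ^ (j+1))
      + tv b a m / b ^ m := by
    intro m
    rw [← hf0, tv_unfold hb1 ha' 0 m]
    simp only [Nat.zero_add]
  have hdiv : ∀ (m : ℕ) (u v w : ℝ), u = v + w / b ^ m → u * b ^ m = v * b ^ m + w := by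
    intro m u v w h
    have hbm : (0:ℝ) < b ^ m := by positivity
    rw [h, add_mul, div_mul_cancel₀ _ (ne_of_gt hbm)]
  -- flip lemma: under suitable tail conditions a second expansion exists
  have Hflip : ∀ k, 1 ≤ k → ((a k = 0 ∧ 1 ≤ tv b a k) ∨ (a k = 1 ∧ tv b a k ≤ C₀ - 1)) →
      ¬(∀ c : ℕ → ℕ, (∀ n : ℕ, 1 ≤ n → c n = 0 ∨ c n = 1) →
          ∑' n : ℕ, (c (n + 1) : ℝ) / b ^ (n + 1) = 1 →
          ∀ n : ℕ, 1 ≤ n → c n = a n) := by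
    intro k hk hcase hU
    have hak : a k = 0 ∨ a k = 1 := ha k hk
    set x : ℝ := tv b a k + 2 * (a k : ℝ) - 1 with hxdef
    have hx0 : 0 ≤ x := by
      rcases hcase with ⟨h1, h2⟩ | ⟨h1, h2⟩ <;> rw [hxdef, h1] <;> push_cast <;>
        [linarith; linarith [hfnn k]]
    have hx1 : x ≤ C₀ := by
      rcases hcase with ⟨h1, h2⟩ | ⟨h1, h2⟩ <;> rw [hxdef, h1] <;> push_cast <;>
        [linarith [hfle k, hC₀1]; linarith]
    obtain ⟨ε, hεb, hεsum⟩ := greedy hb1 hb2 hx0 (by rw [← hC₀def]; exact hx1)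
    set c : ℕ → ℕ := fun n => if n < k then a n else if n = k then 1 - a k else ε (n - (k+1))
      with hcdef
    have hcb : ∀ n, 1 ≤ n → c n = 0 ∨ c n = 1 := by
      intro n hn
      rw [hcdef]
      dsimp only
      split
      · exact ha n hn
      · split
        · rcases hak with h | h <;> simp [h]
        · exact hεb _
    have hc1 : ∀ n, 1 ≤ n → c n ≤ 1 := fun n hn => by rcases hcb n hn with h | h <;> omega
    have hck : tv b c k = x := by
      rw [tv, ← hεsum]
      apply tsum_congr
      intro j
      congr 2
      rw [hcdef]
      dsimp only
      rw [if_neg (by omega), if_neg (by omega)]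
      congr 1
      omega
    obtain ⟨t, rfl⟩ : ∃ t, k = t + 1 := ⟨k - 1, by omega⟩
    have hckt : (c (t+1) : ℝ) = 1 - (a (t+1) : ℝ) := by
      rw [hcdef]
      dsimp only
      rw [if_neg (by omega), if_pos rfl]
      push_cast [Nat.cast_sub (ha' (t+1) hk)]
      ring
    have hprefix : ∑ j ∈ Finset.range t, (c (j+1) : ℝ) / b ^ (j+1)
        = ∑ j ∈ Finset.range t, (a (j+1) : ℝ) / b ^ (j+1) := by
      apply Finset.sum_congr rfl
      intro j hj
      rw [Finset.mem_range] at hj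
      rw [hcdef]
      dsimp only
      rw [if_pos (by omega)]
    have hcsum : ∑' n : ℕ, (c (n + 1) : ℝ) / b ^ (n + 1) = 1 := by
      have hg0 : tv b c 0 = ∑' n : ℕ, (c (n + 1) : ℝ) / b ^ (n + 1) := by
        rw [tv]
        apply tsum_congr
        intro j
        simp only [Nat.zero_add]
      rw [← hg0]
      have e1 : tv b c 0 = (∑ j ∈ Finset.range t, (a (j+1) : ℝ) / b ^ (j+1))
          + ((1 - (a (t+1) : ℝ)) + x) / b ^ (t+1) := by
        rw [tv_unfold hb1 hc1 0 t]
        simp only [Nat.zero_add]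
        rw [hprefix, tv_peel hb1 hc1 t, hckt, hck, pow_succ]
        have h2 : (0:ℝ) < b ^ t := by positivity
        field_simp
      have e2 : (1:ℝ) = (∑ j ∈ Finset.range t, (a (j+1) : ℝ) / b ^ (j+1))
          + ((a (t+1) : ℝ) + tv b a (t+1)) / b ^ (t+1) := by
        rw [hunf0 (t+1), Finset.sum_range_succ]
        ring
      have hx2 : (1 : ℝ) - (a (t+1) : ℝ) + x = (a (t+1) : ℝ) + tv b a (t+1) := by
        rw [hxdef]; ring
      rw [e1, hx2]
      exact e2.symm
    have := hU c hcb hcsum (t+1) hk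
    rw [hcdef] at this
    dsimp only at this
    rw [if_neg (by omega), if_pos rfl] at this
    rcases hak with h | h <;> omega
  -- uniqueness implies the tail conditions
  have Hcond : (∀ c : ℕ → ℕ, (∀ n : ℕ, 1 ≤ n → c n = 0 ∨ c n = 1) →
        ∑' n : ℕ, (c (n + 1) : ℝ) / b ^ (n + 1) = 1 →
        ∀ n : ℕ, 1 ≤ n → c n = a n) →
      ∀ k, 1 ≤ k → tv b a k < 1 ∧ C₀ - 1 < tv b a k := by
    intro hU
    have hA : ∀ k, 1 ≤ k → tv b a k < 1 := by
      by_contra hcon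
      push_neg at hcon
      obtain ⟨k', hk', hfk'⟩ := hcon
      have hex : ∃ k, 1 ≤ k ∧ 1 ≤ tv b a k := ⟨k', hk', hfk'⟩
      obtain ⟨hk1, hkf⟩ := Nat.find_spec hex
      set k := Nat.find hex with hkdef
      have hak : a k = 0 := by
        by_contra h
        have hak1 : a k = 1 := by rcases ha k hk1 with h' | h' <;> omega
        have hp := hpeel (k - 1)
        rw [show k - 1 + 1 = k from by omega] at hp
        have h2b : 1 < tv b a (k - 1) := by
          rw [hp, hak1]
          push_cast
          rw [← add_div, lt_div_iff₀ hb0]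
          linarith
        rcases Nat.lt_or_ge 1 k with hgt | hle
        · exact Nat.find_min hex (show k - 1 < k from by omega) ⟨by omega, by linarith⟩
        · have hk1' : k = 1 := by omega
          rw [hk1'] at h2b
          norm_num [hf0] at h2b
      exact Hflip k hk1 (Or.inl ⟨hak, hkf⟩) hU
    have hB : ∀ k, 1 ≤ k → C₀ - 1 < tv b a k := by
      by_contra hcon
      push_neg at hcon
      obtain ⟨k', hk', hfk'⟩ := hcon
      have hex : ∃ k, 1 ≤ k ∧ tv b a k ≤ C₀ - 1 := ⟨k', hk', hfk'⟩
      obtain ⟨hk1, hkf⟩ := Nat.find_spec hex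
      set k := Nat.find hex with hkdef
      rcases ha k hk1 with hak0 | hak1
      · have hp := hpeel (k - 1)
        rw [show k - 1 + 1 = k from by omega, hak0] at hp
        push_cast at hp
        rw [zero_div, zero_add] at hp
        rcases Nat.lt_or_ge 1 k with hgt | hle
        · refine absurd (Nat.find_min hex (show k - 1 < k from by omega)) (not_not.mpr ?_)
          refine ⟨by omega, ?_⟩
          rw [hp, div_le_iff₀ hb0]
          nlinarith [hC₀1]
        · have hk1' : k = 1 := by omega
          rw [hk1'] at hp hak0
          rw [hf0] at hp
          have hf1 : tv b a 1 = b := by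
            field_simp at hp
            linarith
          exact Hflip 1 le_rfl (Or.inl ⟨hak0, by rw [hf1]; linarith⟩) hU
      · exact Hflip k hk1 (Or.inr ⟨hak1, hkf⟩) hU
    exact fun k hk => ⟨hA k hk, hB k hk⟩
  -- tail conditions imply the lexicographic conditions
  have Hcondlex : (∀ k, 1 ≤ k → tv b a k < 1 ∧ C₀ - 1 < tv b a k) →
      ∀ k : ℕ, 0 < k →
        LexLt (fun n => 1 - a (n + 1)) (fun n => a (n + 1 + k)) ∧
        LexLt (fun n => a (n + 1 + k)) (fun n => a (n + 1)) := by
    intro hcond k hk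
    constructor
    · -- conjugate < shift
      by_cases hD : ∃ n, 1 - a (n + 1) ≠ a (n + 1 + k)
      · obtain ⟨n₀, hag, hne⟩ : ∃ n₀ : ℕ, (∀ j < n₀, 1 - a (j + 1) = a (j + 1 + k)) ∧
            1 - a (n₀ + 1) ≠ a (n₀ + 1 + k) :=
          ⟨Nat.find hD, fun j hj => not_not.mp (Nat.find_min hD hj), Nat.find_spec hD⟩
        refine ⟨n₀, hag, ?_⟩
        by_contra hlt
        push_neg at hlt
        have h1 : a (n₀ + 1) = 0 := by
          rcases ha (n₀ + 1 + k) (by omega) with h | h <;>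
            rcases ha (n₀ + 1) (by omega) with h' | h' <;> omega
        have h2 : a (n₀ + 1 + k) = 0 := by
          rcases ha (n₀ + 1 + k) (by omega) with h | h <;>
            rcases ha (n₀ + 1) (by omega) with h' | h' <;> omega
        have hcast : ∀ j, j < n₀ → (a (k + j + 1) : ℝ) = 1 - (a (j + 1) : ℝ) := by
          intro j hj
          rw [show k + j + 1 = j + 1 + k from by omega, ← hag j hj,
            Nat.cast_sub (ha' (j + 1) (by omega)), Nat.cast_one]
        have hgeo := geom_finsum hb1 n₀
        rw [← hC₀def] at hgeo
        have hpre : ∑ j ∈ Finset.range n₀, (a (k + j + 1) : ℝ) / b ^ (j + 1)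
            = (C₀ - C₀ / b ^ n₀) - ∑ j ∈ Finset.range n₀, (a (j + 1) : ℝ) / b ^ (j + 1) := by
          rw [← hgeo, ← Finset.sum_sub_distrib]
          apply Finset.sum_congr rfl
          intro j hj
          rw [Finset.mem_range] at hj
          rw [hcast j hj]
          ring
        have hQ : C₀ / b ^ n₀ = (C₀ + 1) / b ^ (n₀ + 1) := by
          rw [pow_succ, div_eq_div_iff (by positivity) (by positivity)]
          linear_combination b ^ n₀ * hC₀b
        have e1 : tv b a k = (C₀ - ∑ j ∈ Finset.range n₀, (a (j + 1) : ℝ) / b ^ (j + 1))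
            + (tv b a (k + (n₀ + 1)) - (C₀ + 1)) / b ^ (n₀ + 1) := by
          rw [tv_unfold hb1 ha' k (n₀ + 1), Finset.sum_range_succ, hpre, hQ,
            show (a (k + n₀ + 1) : ℝ) = 0 from by
              rw [show k + n₀ + 1 = n₀ + 1 + k from by omega, h2]; norm_num]
          ring
        have e2 : (1 : ℝ) = (∑ j ∈ Finset.range n₀, (a (j + 1) : ℝ) / b ^ (j + 1))
            + tv b a (n₀ + 1) / b ^ (n₀ + 1) := by
          rw [hunf0 (n₀ + 1), Finset.sum_range_succ,
            show ((a (n₀ + 1) : ℝ)) = 0 from by rw [h1]; norm_num]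
          ring
        have e3 := hdiv (n₀ + 1) _ _ _ e1
        have e4 := hdiv (n₀ + 1) _ _ _ e2
        have h5 := (hcond k (by omega)).2
        have h6 := (hcond (n₀ + 1) (by omega)).1
        have h7 := hfle (k + (n₀ + 1))
        have hbm : (0 : ℝ) < b ^ (n₀ + 1) := by positivity
        have h8 := mul_lt_mul_of_pos_right h5 hbm
        nlinarith [e3, e4, h8, h6, h7]
      · push_neg at hD
        exfalso
        have heq : tv b a k = C₀ - 1 := by
          have h1 : ∀ j : ℕ, (a (k + j + 1) : ℝ) / b ^ (j + 1)
              = (1 : ℝ) / b ^ (j + 1) - (a (j + 1) : ℝ) / b ^ (j + 1) := by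
            intro j
            rw [show k + j + 1 = j + 1 + k from by omega, ← hD j,
              Nat.cast_sub (ha' (j + 1) (by omega))]
            push_cast
            ring
          rw [tv, tsum_congr h1, Summable.tsum_sub ((tv_summable hb1 (d := fun _ => 1)
            (fun n _ => le_refl 1) 0).congr (by intro j; norm_num)) (by
              have := tv_summable hb1 ha' 0
              simpa only [Nat.zero_add] using this), geom_tsum hb1, ← hC₀def, hsum]
        linarith [(hcond k hk).2]
    · -- shift < a
      by_cases hD : ∃ n, a (n + 1 + k) ≠ a (n + 1)
      · obtain ⟨n₀, hag, hne⟩ : ∃ n₀ : ℕ, (∀ j < n₀, a (j + 1 + k) = a (j + 1)) ∧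
            a (n₀ + 1 + k) ≠ a (n₀ + 1) :=
          ⟨Nat.find hD, fun j hj => not_not.mp (Nat.find_min hD hj), Nat.find_spec hD⟩
        refine ⟨n₀, hag, ?_⟩
        by_contra hlt
        push_neg at hlt
        have h1 : a (n₀ + 1) = 0 := by
          rcases ha (n₀ + 1 + k) (by omega) with h | h <;>
            rcases ha (n₀ + 1) (by omega) with h' | h' <;> omega
        have h2 : a (n₀ + 1 + k) = 1 := by
          rcases ha (n₀ + 1 + k) (by omega) with h | h <;>
            rcases ha (n₀ + 1) (by omega) with h' | h' <;> omega
        have hpre : ∑ j ∈ Finset.range n₀, (a (k + j + 1) : ℝ) / b ^ (j + 1)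
            = ∑ j ∈ Finset.range n₀, (a (j + 1) : ℝ) / b ^ (j + 1) := by
          apply Finset.sum_congr rfl
          intro j hj
          rw [Finset.mem_range] at hj
          rw [show k + j + 1 = j + 1 + k from by omega, hag j hj]
        have e1 : tv b a k = (∑ j ∈ Finset.range n₀, (a (j + 1) : ℝ) / b ^ (j + 1))
            + (1 + tv b a (k + (n₀ + 1))) / b ^ (n₀ + 1) := by
          rw [tv_unfold hb1 ha' k (n₀ + 1), Finset.sum_range_succ, hpre,
            show (a (k + n₀ + 1) : ℝ) = 1 from by
              rw [show k + n₀ + 1 = n₀ + 1 + k from by omega, h2]; norm_num]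
          ring
        have e2 : (1 : ℝ) = (∑ j ∈ Finset.range n₀, (a (j + 1) : ℝ) / b ^ (j + 1))
            + tv b a (n₀ + 1) / b ^ (n₀ + 1) := by
          rw [hunf0 (n₀ + 1), Finset.sum_range_succ,
            show ((a (n₀ + 1) : ℝ)) = 0 from by rw [h1]; norm_num]
          ring
        have e3 := hdiv (n₀ + 1) _ _ _ e1
        have e4 := hdiv (n₀ + 1) _ _ _ e2
        have h5 := (hcond k (by omega)).1
        have h6 := (hcond (n₀ + 1) (by omega)).1
        have h7 := hfnn (k + (n₀ + 1))
        have hbm : (0 : ℝ) < b ^ (n₀ + 1) := by positivity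
        have h8 := mul_lt_mul_of_pos_right h5 hbm
        nlinarith [e3, e4, h8, h6, h7]
      · push_neg at hD
        exfalso
        have heq : tv b a k = 1 := by
          rw [← hf0, tv, tv]
          apply tsum_congr
          intro j
          rw [show k + j + 1 = j + 1 + k from by omega, hD j,
            show 0 + j + 1 = j + 1 from by omega]
        linarith [(hcond k hk).1]
  -- lexicographic conditions imply the tail conditions
  have Hlexcond : (∀ k : ℕ, 0 < k →
        LexLt (fun n => 1 - a (n + 1)) (fun n => a (n + 1 + k)) ∧
        LexLt (fun n => a (n + 1 + k)) (fun n => a (n + 1))) →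
      ∀ k, 1 ≤ k → tv b a k < 1 ∧ C₀ - 1 < tv b a k := by
    intro hlex
    have hpos : ∀ m, 1 ≤ m → 0 < tv b a m := by
      intro m hm
      obtain ⟨n, hag, hlt⟩ := (hlex m hm).1
      simp only [] at hag hlt
      have h1 : 1 ≤ a (n + 1 + m) := by omega
      have h1' : (1 : ℝ) ≤ (a (m + n + 1) : ℝ) := by
        rw [show m + n + 1 = n + 1 + m from by omega]
        exact_mod_cast h1
      have hterm : (0 : ℝ) < (a (m + n + 1) : ℝ) / b ^ (n + 1) := by
        apply div_pos (by linarith) (by positivity)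
      have hle : (a (m + n + 1) : ℝ) / b ^ (n + 1) ≤ tv b a m := by
        rw [tv]
        exact Summable.le_tsum (tv_summable hb1 ha' m) n (fun j _ => by positivity)
      linarith
    have recA : ∀ k, 1 ≤ k → ∃ m, 1 ≤ m ∧ 0 < tv b a m ∧
        tv b a (k + m) = b ^ m * (tv b a k - 1) + 1 + tv b a m := by
      intro k hk
      obtain ⟨n₀, hag, hlt⟩ := (hlex k hk).2
      simp only [] at hag hlt
      have h1 : a (n₀ + 1) = 1 := by
        rcases ha (n₀ + 1) (by omega) with h | h <;> omega
      have h2 : a (n₀ + 1 + k) = 0 := by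
        rcases ha (n₀ + 1 + k) (by omega) with h | h <;>
          rcases ha (n₀ + 1) (by omega) with h' | h' <;> omega
      refine ⟨n₀ + 1, by omega, hpos (n₀ + 1) (by omega), ?_⟩
      have hpre : ∑ j ∈ Finset.range n₀, (a (k + j + 1) : ℝ) / b ^ (j + 1)
          = ∑ j ∈ Finset.range n₀, (a (j + 1) : ℝ) / b ^ (j + 1) := by
        apply Finset.sum_congr rfl
        intro j hj
        rw [Finset.mem_range] at hj
        rw [show k + j + 1 = j + 1 + k from by omega, hag j hj]
      have e1 : tv b a k = (∑ j ∈ Finset.range n₀, (a (j + 1) : ℝ) / b ^ (j + 1))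
          + tv b a (k + (n₀ + 1)) / b ^ (n₀ + 1) := by
        rw [tv_unfold hb1 ha' k (n₀ + 1), Finset.sum_range_succ, hpre,
          show (a (k + n₀ + 1) : ℝ) = 0 from by
            rw [show k + n₀ + 1 = n₀ + 1 + k from by omega, h2]; norm_num]
        ring
      have e2 : (1 : ℝ) = (∑ j ∈ Finset.range n₀, (a (j + 1) : ℝ) / b ^ (j + 1))
          + (1 + tv b a (n₀ + 1)) / b ^ (n₀ + 1) := by
        have h := hunf0 (n₀ + 1)
        rw [Finset.sum_range_succ,
          show ((a (n₀ + 1) : ℝ)) = 1 from by rw [h1]; norm_num] at h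
        linear_combination h
      have e3 := hdiv (n₀ + 1) _ _ _ e1
      have e4 := hdiv (n₀ + 1) _ _ _ e2
      have : k + (n₀ + 1) = k + (n₀ + 1) := rfl
      linear_combination e4 - e3
    have condA := blowup hb1 (tv b a) (tv b a) C₀ hfle recA
    have recB : ∀ k, 1 ≤ k → ∃ m, 1 ≤ m ∧ 0 < tv b a m ∧
        C₀ - tv b a (k + m) = b ^ m * ((C₀ - tv b a k) - 1) + 1 + tv b a m := by
      intro k hk
      obtain ⟨n₀, hag, hlt⟩ := (hlex k hk).1
      simp only [] at hag hlt
      have h1 : a (n₀ + 1) = 1 := by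
        rcases ha (n₀ + 1 + k) (by omega) with h | h <;>
          rcases ha (n₀ + 1) (by omega) with h' | h' <;> omega
      have h2 : a (n₀ + 1 + k) = 1 := by
        rcases ha (n₀ + 1 + k) (by omega) with h | h <;> omega
      refine ⟨n₀ + 1, by omega, hpos (n₀ + 1) (by omega), ?_⟩
      have hcast : ∀ j, j < n₀ → (a (k + j + 1) : ℝ) = 1 - (a (j + 1) : ℝ) := by
        intro j hj
        rw [show k + j + 1 = j + 1 + k from by omega, ← hag j hj,
          Nat.cast_sub (ha' (j + 1) (by omega)), Nat.cast_one]
      have hgeo := geom_finsum hb1 n₀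
      rw [← hC₀def] at hgeo
      have hpre : ∑ j ∈ Finset.range n₀, (a (k + j + 1) : ℝ) / b ^ (j + 1)
          = (C₀ - C₀ / b ^ n₀) - ∑ j ∈ Finset.range n₀, (a (j + 1) : ℝ) / b ^ (j + 1) := by
        rw [← hgeo, ← Finset.sum_sub_distrib]
        apply Finset.sum_congr rfl
        intro j hj
        rw [Finset.mem_range] at hj
        rw [hcast j hj]
        ring
      have hQ : C₀ / b ^ n₀ = (C₀ + 1) / b ^ (n₀ + 1) := by
        rw [pow_succ, div_eq_div_iff (by positivity) (by positivity)]
        linear_combination b ^ n₀ * hC₀b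
      have e1 : tv b a k = (C₀ - ∑ j ∈ Finset.range n₀, (a (j + 1) : ℝ) / b ^ (j + 1))
          + ((1 + tv b a (k + (n₀ + 1))) - (C₀ + 1)) / b ^ (n₀ + 1) := by
        rw [tv_unfold hb1 ha' k (n₀ + 1), Finset.sum_range_succ, hpre, hQ,
          show (a (k + n₀ + 1) : ℝ) = 1 from by
            rw [show k + n₀ + 1 = n₀ + 1 + k from by omega, h2]; norm_num]
        ring
      have e2 : (1 : ℝ) = (∑ j ∈ Finset.range n₀, (a (j + 1) : ℝ) / b ^ (j + 1))
          + (1 + tv b a (n₀ + 1)) / b ^ (n₀ + 1) := by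
        have h := hunf0 (n₀ + 1)
        rw [Finset.sum_range_succ,
          show ((a (n₀ + 1) : ℝ)) = 1 from by rw [h1]; norm_num] at h
        linear_combination h
      have e3 := hdiv (n₀ + 1) _ _ _ e1
      have e4 := hdiv (n₀ + 1) _ _ _ e2
      linear_combination e3 + e4
    have condB := blowup hb1 (fun k => C₀ - tv b a k) (tv b a) C₀
      (fun k => by have := hfnn k; linarith) recB
    intro k hk
    refine ⟨condA k hk, ?_⟩
    have := condB k hk
    linarith
  -- tail conditions imply uniqueness
  have Hconduniq : (∀ k, 1 ≤ k → tv b a k < 1 ∧ C₀ - 1 < tv b a k) →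
      ∀ c : ℕ → ℕ, (∀ n : ℕ, 1 ≤ n → c n = 0 ∨ c n = 1) →
        ∑' n : ℕ, (c (n + 1) : ℝ) / b ^ (n + 1) = 1 →
        ∀ n : ℕ, 1 ≤ n → c n = a n := by
    intro hcond c hcb hcsum
    by_contra hne
    push_neg at hne
    obtain ⟨n', hn', hcn'⟩ := hne
    have hex : ∃ n, 1 ≤ n ∧ c n ≠ a n := ⟨n', hn', hcn'⟩
    obtain ⟨hn1, hnne⟩ := Nat.find_spec hex
    have hmin : ∀ j, 1 ≤ j → j < Nat.find hex → c j = a j := by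
      intro j h1 h2
      have h3 := Nat.find_min hex h2
      rw [not_and] at h3
      exact not_not.mp (h3 h1)
    obtain ⟨t, ht⟩ : ∃ t, Nat.find hex = t + 1 := ⟨Nat.find hex - 1, by omega⟩
    rw [ht] at hn1 hnne
    have hmin' : ∀ j, 1 ≤ j → j < t + 1 → c j = a j := by
      intro j h1 h2
      exact hmin j h1 (by omega)
    have hc1 : ∀ n, 1 ≤ n → c n ≤ 1 := fun n hn => by rcases hcb n hn with h | h <;> omega
    have hg0 : tv b c 0 = 1 := by
      rw [tv, ← hcsum]
      apply tsum_congr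
      intro j
      simp only [Nat.zero_add]
    have e1 : (1 : ℝ) = (∑ j ∈ Finset.range t, (a (j + 1) : ℝ) / b ^ (j + 1))
        + ((c (t + 1) : ℝ) + tv b c (t + 1)) / b ^ (t + 1) := by
      rw [← hg0, tv_unfold hb1 hc1 0 t]
      simp only [Nat.zero_add]
      rw [tv_peel hb1 hc1 t]
      have hpre : ∑ j ∈ Finset.range t, (c (j + 1) : ℝ) / b ^ (j + 1)
          = ∑ j ∈ Finset.range t, (a (j + 1) : ℝ) / b ^ (j + 1) := by
        apply Finset.sum_congr rfl
        intro j hj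
        rw [Finset.mem_range] at hj
        rw [hmin' (j + 1) (by omega) (by omega)]
      rw [hpre, pow_succ]
      have h2 : (0 : ℝ) < b ^ t := by positivity
      field_simp
    have e2 : (1 : ℝ) = (∑ j ∈ Finset.range t, (a (j + 1) : ℝ) / b ^ (j + 1))
        + ((a (t + 1) : ℝ) + tv b a (t + 1)) / b ^ (t + 1) := by
      rw [hunf0 (t + 1), Finset.sum_range_succ]
      ring
    have e3 := hdiv (t + 1) _ _ _ e1
    have e4 := hdiv (t + 1) _ _ _ e2
    have ekey : (c (t + 1) : ℝ) + tv b c (t + 1) = (a (t + 1) : ℝ) + tv b a (t + 1) := by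
      linarith
    have h5 := (hcond (t + 1) (by omega)).1
    have h6 := (hcond (t + 1) (by omega)).2
    have hgnn := tv_nonneg hb1 c (t + 1)
    have hgle := tv_le hb1 hc1 (t + 1)
    rw [← hC₀def] at hgle
    rcases hcb (t + 1) hn1 with hc0 | hc0 <;> rcases ha (t + 1) hn1 with ha0 | ha0
    · omega
    · rw [hc0, ha0] at ekey
      push_cast at ekey
      linarith
    · rw [hc0, ha0] at ekey
      push_cast at ekey
      linarith
    · omega
  -- assembly
  constructor
  · intro hU k hk
    exact Hcondlex (Hcond hU) k hk
  · intro hlex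
    exact Hconduniq (Hlexcond hlex)
end

section
/- An irrational real number ξ has an eventually periodic continued fraction expansion (i.e., its sequence of partial quotients (a_n)_{n≥0} is periodic from some index on) if and only if ξ is a quadratic irrational, i.e., algebraic of degree exactly 2 over ℚ. -/
private def cfM (b : ℕ → ℤ) : ℕ → (ℤ × ℤ) × (ℤ × ℤ)
  | 0 => ((1, 0), (0, 1))
  | n+1 =>
    (((cfM b n).1.1 * b n + (cfM b n).1.2, (cfM b n).1.1),
     ((cfM b n).2.1 * b n + (cfM b n).2.2, (cfM b n).2.1))

private def QuadI (y : ℝ) : Prop :=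
  ∃ A B C : ℤ, A ≠ 0 ∧ (A : ℝ) * y ^ 2 + B * y + C = 0

private lemma lead_ne (z : ℝ) (hz : Irrational z) (α β γ : ℤ)
    (h : (α : ℝ) * z ^ 2 + β * z + γ = 0)
    (h0 : ¬(α = 0 ∧ β = 0 ∧ γ = 0)) : α ≠ 0 := by
  intro hα
  subst hα
  push_cast at h
  by_cases hβ : β = 0
  · subst hβ
    push_cast at h
    have : (γ : ℝ) = 0 := by linarith
    exact h0 ⟨rfl, rfl, by exact_mod_cast this⟩
  · have hβR : (β : ℝ) ≠ 0 := by exact_mod_cast hβ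
    have hzq : z = ((-γ / β : ℚ) : ℝ) := by
      push_cast
      field_simp
      linarith
    exact hz ⟨-γ / β, hzq.symm⟩

private lemma quad_step (y z : ℝ) (m : ℤ) (hy : Irrational y) (hz : Irrational z)
    (h : z * (y - m) = 1) : QuadI y ↔ QuadI z := by
  constructor
  · rintro ⟨A, B, C, hA, hq⟩
    have heq : ((A * m ^ 2 + B * m + C : ℤ) : ℝ) * z ^ 2 + ((2 * A * m + B : ℤ) : ℝ) * z + (A : ℝ) = 0 := by
      push_cast
      linear_combination z^2 * hq - ((B:ℝ)*z + A*(m*z + 1 + z*y)) * h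
    exact ⟨A * m ^ 2 + B * m + C, 2 * A * m + B, A,
      lead_ne z hz _ _ _ heq (by rintro ⟨-, -, h3⟩; exact hA h3), heq⟩
  · rintro ⟨A, B, C, hA, hq⟩
    have heq : ((C : ℤ) : ℝ) * y ^ 2 + ((B - 2 * m * C : ℤ) : ℝ) * y + ((A - m * B + m ^ 2 * C : ℤ) : ℝ) = 0 := by
      push_cast
      linear_combination (y - m)^2 * hq - ((B:ℝ)*(y-m) + A*(z*(y-m)+1)) * h
    refine ⟨C, B - 2 * m * C, A - m * B + m ^ 2 * C,
      lead_ne y hy _ _ _ heq ?_, heq⟩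
    rintro ⟨h1, h2, h3⟩
    apply hA
    subst h1
    simp at h2
    subst h2
    simpa using h3

open Polynomial in
private lemma quadI_iff_deg2 (ξ : ℝ) (hirr : Irrational ξ) :
    QuadI ξ ↔ (IsAlgebraic ℚ ξ ∧ (minpoly ℚ ξ).natDegree = 2) := by
  constructor
  · rintro ⟨A, B, C0, hA, heq⟩
    have hAq : (A : ℚ) ≠ 0 := by exact_mod_cast hA
    set q : ℚ[X] := C (A:ℚ) * X ^ 2 + C (B:ℚ) * X + C (C0:ℚ) with hq
    have hdeg : q.natDegree = 2 := Polynomial.natDegree_quadratic hAq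
    have hq0 : q ≠ 0 := by
      intro h
      rw [h] at hdeg
      simp at hdeg
    have heval : Polynomial.aeval ξ q = 0 := by
      rw [hq]
      simp only [map_add, map_mul, aeval_C, aeval_X, map_pow]
      have h1 : (algebraMap ℚ ℝ) (A:ℚ) = (A:ℝ) := by push_cast; rfl
      have h2 : (algebraMap ℚ ℝ) (B:ℚ) = (B:ℝ) := by push_cast; rfl
      have h3 : (algebraMap ℚ ℝ) (C0:ℚ) = (C0:ℝ) := by push_cast; rfl
      rw [h1, h2, h3]
      linear_combination heq
    have halg : IsAlgebraic ℚ ξ := ⟨q, hq0, heval⟩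
    refine ⟨halg, ?_⟩
    have hint : IsIntegral ℚ ξ := halg.isIntegral
    have hle : (minpoly ℚ ξ).natDegree ≤ 2 := by
      have := Polynomial.natDegree_le_of_dvd (minpoly.dvd ℚ ξ heval) hq0
      omega
    have hpos : 0 < (minpoly ℚ ξ).natDegree := minpoly.natDegree_pos hint
    have hne1 : (minpoly ℚ ξ).natDegree ≠ 1 := by
      intro h1
      have hm : (minpoly ℚ ξ).Monic := minpoly.monic hint
      have := hm.eq_X_add_C h1
      have heval2 := minpoly.aeval ℚ ξ
      rw [this] at heval2
      simp only [map_add, aeval_X, aeval_C, eq_ratCast] at heval2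
      exact hirr ⟨-(minpoly ℚ ξ).coeff 0, by push_cast; linarith [heval2]⟩
    omega
  · rintro ⟨halg, hdeg⟩
    have hint : IsIntegral ℚ ξ := halg.isIntegral
    set p := minpoly ℚ ξ with hp
    have heval := minpoly.aeval ℚ ξ
    rw [Polynomial.aeval_eq_sum_range (R := ℚ) ξ, hdeg] at heval
    have hc2 : p.coeff 2 = 1 := by
      rw [← hdeg]; exact (minpoly.monic hint).coeff_natDegree
    rw [Finset.sum_range_succ, Finset.sum_range_succ, Finset.sum_range_one, hc2] at heval
    simp only [Rat.smul_def, pow_zero, pow_one, mul_one, Rat.cast_one, one_mul] at heval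
    -- heval : ↑(p.coeff 0) + ↑(p.coeff 1) * ξ + ξ ^ 2 = 0
    set c0 := p.coeff 0
    set c1 := p.coeff 1
    refine ⟨(c1.den : ℤ) * (c0.den : ℤ), c1.num * c0.den, c0.num * c1.den, ?_, ?_⟩
    · have := c1.den_nz
      have := c0.den_nz
      positivity
    · have e1 : (c1.num : ℝ) = (c1 : ℝ) * c1.den := by
        rw [Rat.cast_def]; field_simp
      have e0 : (c0.num : ℝ) = (c0 : ℝ) * c0.den := by
        rw [Rat.cast_def]; field_simp
      push_cast
      rw [e1, e0]
      linear_combination ((c1.den : ℝ) * (c0.den : ℝ)) * heval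

/-- Möbius identity: `u 0 = (P uₙ + P')/(Q uₙ + Q')` in multiplied form. -/
private lemma cf_id (u : ℕ → ℝ) (b : ℕ → ℤ)
    (hmul : ∀ n, (u n - b n) * u (n+1) = 1) :
    ∀ n, u 0 * ((cfM b n).2.1 * u n + (cfM b n).2.2)
      = (cfM b n).1.1 * u n + (cfM b n).1.2 := by
  intro n
  induction n with
  | zero => simp [cfM]
  | succ n ih =>
    show u 0 * (((cfM b n).2.1 * b n + (cfM b n).2.2 : ℤ) * u (n+1) + ((cfM b n).2.1 : ℤ))
      = ((cfM b n).1.1 * b n + (cfM b n).1.2 : ℤ) * u (n+1) + ((cfM b n).1.1 : ℤ)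
    push_cast
    linear_combination u (n+1) * ih - (u 0 * ((cfM b n).2.1 : ℝ) - ((cfM b n).1.1 : ℝ)) * hmul n

private lemma cf_det (b : ℕ → ℤ) :
    ∀ n, (cfM b n).1.1 * (cfM b n).2.2 - (cfM b n).1.2 * (cfM b n).2.1 = (-1)^n := by
  intro n
  induction n with
  | zero => simp [cfM]
  | succ n ih =>
    show ((cfM b n).1.1 * b n + (cfM b n).1.2) * (cfM b n).2.1
        - (cfM b n).1.1 * ((cfM b n).2.1 * b n + (cfM b n).2.2) = (-1)^(n+1)
    rw [pow_succ]
    linear_combination (-1 : ℤ) * ih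

private lemma cf_q (b : ℕ → ℤ) (hb1 : ∀ n, 1 ≤ b n) :
    ∀ n, 0 ≤ (cfM b n).2.1 ∧ 0 ≤ (cfM b n).2.2 ∧ (n : ℤ) - 1 ≤ (cfM b n).2.1 ∧
      (1 ≤ n → 1 ≤ (cfM b n).2.1) ∧ (2 ≤ n → 1 ≤ (cfM b n).2.2) := by
  intro n
  induction n with
  | zero => simp [cfM]
  | succ n ih =>
    obtain ⟨q0, q1, q2, q3, q4⟩ := ih
    have hb := hb1 n
    show 0 ≤ (cfM b n).2.1 * b n + (cfM b n).2.2 ∧ 0 ≤ (cfM b n).2.1 ∧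
      ((n:ℤ) + 1) - 1 ≤ (cfM b n).2.1 * b n + (cfM b n).2.2 ∧
      (1 ≤ n + 1 → 1 ≤ (cfM b n).2.1 * b n + (cfM b n).2.2) ∧
      (2 ≤ n + 1 → 1 ≤ (cfM b n).2.1)
    rcases Nat.lt_or_ge n 1 with h | h
    · interval_cases n
      simp [cfM]
    · have hq3 := q3 h
      rcases Nat.lt_or_ge n 2 with h2 | h2
      · interval_cases n
        refine ⟨by nlinarith, q0, by push_cast; nlinarith, fun _ => by nlinarith, fun _ => hq3⟩
      · have hq4 := q4 h2
        have hn : (2 : ℤ) ≤ (n : ℤ) := by exact_mod_cast h2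
        refine ⟨by nlinarith, q0, by push_cast; nlinarith, fun _ => by nlinarith, fun _ => hq3⟩

/-- Two sequences obeying the same CF recursion with the same partial quotients have
the same starting value. -/
private lemma cf_eq_of_same (u v : ℕ → ℝ) (b : ℕ → ℤ)
    (hbu : ∀ n, (b n : ℝ) < u n ∧ u n < b n + 1)
    (hbv : ∀ n, (b n : ℝ) < v n ∧ v n < b n + 1)
    (hb1 : ∀ n, 1 ≤ b n)
    (hmulu : ∀ n, (u n - b n) * u (n+1) = 1)
    (hmulv : ∀ n, (v n - b n) * v (n+1) = 1) :
    u 0 = v 0 := by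
  have hu1 : ∀ n, 1 < u n := fun n => by
    have h1 := (hbu n).1
    have h2 : (1 : ℝ) ≤ b n := by exact_mod_cast hb1 n
    linarith
  have hv1 : ∀ n, 1 < v n := fun n => by
    have h1 := (hbv n).1
    have h2 : (1 : ℝ) ≤ b n := by exact_mod_cast hb1 n
    linarith
  have hq := cf_q b hb1
  have key : ∀ n : ℕ, 1 ≤ n → |u 0 - v 0| * ((n : ℝ) - 1) ≤ 1 := by
    intro n hn1
    have hidu := cf_id u b hmulu n
    have hidv := cf_id v b hmulv n
    have hdetR : (((cfM b n).1.1 : ℝ) * (cfM b n).2.2 - (cfM b n).1.2 * (cfM b n).2.1)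
        = (-1 : ℝ)^n := by exact_mod_cast congrArg (Int.cast : ℤ → ℝ) (cf_det b n)
    have hQ0 : (0:ℝ) ≤ ((cfM b n).2.1 : ℝ) := by exact_mod_cast (hq n).1
    have hQ'0 : (0:ℝ) ≤ ((cfM b n).2.2 : ℝ) := by exact_mod_cast (hq n).2.1
    have hQn : (n : ℝ) - 1 ≤ ((cfM b n).2.1 : ℝ) := by exact_mod_cast (hq n).2.2.1
    have hQ1 : (1 : ℝ) ≤ ((cfM b n).2.1 : ℝ) := by exact_mod_cast (hq n).2.2.2.1 hn1
    set P := ((cfM b n).1.1 : ℝ)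
    set P' := ((cfM b n).1.2 : ℝ)
    set Q := ((cfM b n).2.1 : ℝ)
    set Q' := ((cfM b n).2.2 : ℝ)
    have hDu : (n : ℝ) - 1 ≤ Q * u n + Q' := by nlinarith [hu1 n]
    have hDu0 : 0 ≤ Q * u n + Q' := by nlinarith [hu1 n]
    have hDv1 : 1 ≤ Q * v n + Q' := by nlinarith [hv1 n]
    have hG : (u 0 - v 0) * ((Q * u n + Q') * (Q * v n + Q')) = (-1 : ℝ)^n * (u n - v n) := by
      linear_combination (Q * v n + Q') * hidu - (Q * u n + Q') * hidv + (u n - v n) * hdetR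
    have habs : |u 0 - v 0| * ((Q * u n + Q') * (Q * v n + Q')) = |u n - v n| := by
      have h0 : 0 ≤ (Q * u n + Q') * (Q * v n + Q') := by nlinarith
      calc |u 0 - v 0| * ((Q * u n + Q') * (Q * v n + Q'))
          = |(u 0 - v 0) * ((Q * u n + Q') * (Q * v n + Q'))| := by
            rw [abs_mul, abs_of_nonneg h0]
        _ = |(-1 : ℝ)^n * (u n - v n)| := by rw [hG]
        _ = |u n - v n| := by rw [abs_mul, abs_pow, abs_neg, abs_one, one_pow, one_mul]
    have huv : |u n - v n| ≤ 1 := by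
      rw [abs_sub_le_iff]
      constructor
      · linarith [(hbu n).2, (hbv n).1]
      · linarith [(hbv n).2, (hbu n).1]
    calc |u 0 - v 0| * ((n : ℝ) - 1)
        ≤ |u 0 - v 0| * ((Q * u n + Q') * (Q * v n + Q')) := by
          have hw := abs_nonneg (u 0 - v 0)
          have h2 : (n:ℝ) - 1 ≤ (Q * u n + Q') * (Q * v n + Q') := by nlinarith
          exact mul_le_mul_of_nonneg_left h2 hw
      _ = |u n - v n| := habs
      _ ≤ 1 := huv
  by_contra hne
  have hpos : 0 < |u 0 - v 0| := abs_pos.mpr (sub_ne_zero.mpr hne)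
  obtain ⟨m, hm⟩ := exists_nat_gt (1 / |u 0 - v 0| + 1)
  have hk := key (m + 1) (by omega)
  push_cast at hk
  have h1 : 1 / |u 0 - v 0| < (m : ℝ) := by linarith
  rw [div_lt_iff₀ hpos] at h1
  nlinarith

/-- A purely periodic tail satisfies an integer quadratic. -/
private lemma cf_quad_of_periodic (u : ℕ → ℝ) (b : ℕ → ℤ)
    (hmul : ∀ n, (u n - b n) * u (n+1) = 1)
    (hb1 : ∀ n, 1 ≤ b n)
    (p : ℕ) (hp : 0 < p) (hper : u p = u 0) :
    ∃ A B C : ℤ, A ≠ 0 ∧ (A : ℝ) * (u 0) ^ 2 + B * (u 0) + C = 0 := by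
  have hid := cf_id u b hmul p
  rw [hper] at hid
  have hQ1 : 1 ≤ (cfM b p).2.1 := (cf_q b hb1 p).2.2.2.1 hp
  refine ⟨(cfM b p).2.1, (cfM b p).2.2 - (cfM b p).1.1, -(cfM b p).1.2, by omega, ?_⟩
  push_cast
  linear_combination hid

private lemma root_transform (A B C P P' Q Q' : ℤ) (u0 un : ℝ)
    (heq : (A:ℝ) * u0^2 + B * u0 + C = 0)
    (hid : u0 * ((Q:ℝ) * un + Q') = (P:ℝ) * un + P') :
    ((A*P^2 + B*P*Q + C*Q^2 : ℤ) : ℝ) * un^2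
      + ((2*A*P*P' + B*(P*Q' + P'*Q) + 2*C*Q*Q' : ℤ) : ℝ) * un
      + ((A*P'^2 + B*P'*Q' + C*Q'^2 : ℤ) : ℝ) = 0 := by
  push_cast
  linear_combination ((Q:ℝ)*un + Q')^2 * heq
    - ((A:ℝ)*(((P:ℝ)*un+P') + u0*((Q:ℝ)*un+Q')) + (B:ℝ)*((Q:ℝ)*un+Q')) * hid

private lemma disc_eq (A B C P P' Q Q' : ℤ) :
    (2*A*P*P' + B*(P*Q' + P'*Q) + 2*C*Q*Q')^2
      - 4*(A*P^2 + B*P*Q + C*Q^2)*(A*P'^2 + B*P'*Q' + C*Q'^2)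
    = (B^2 - 4*A*C)*(P*Q' - P'*Q)^2 := by ring

private lemma quad_nonzero (z : ℝ) (hz : Irrational z) (α β γ : ℤ)
    (h : (α : ℝ) * z ^ 2 + β * z + γ = 0) (hd : β^2 - 4*α*γ ≠ 0) : α ≠ 0 := by
  intro hα
  subst hα
  by_cases hβ : β = 0
  · subst hβ
    push_cast at h
    have hγ : (γ:ℝ) = 0 := by linarith
    have : γ = 0 := by exact_mod_cast hγ
    subst this
    simp at hd
  · have hβR : (β:ℝ) ≠ 0 := by exact_mod_cast hβ
    push_cast at h
    refine hz ⟨-γ/β, ?_⟩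
    push_cast
    field_simp
    linarith

private lemma An_bound (A B C P Q : ℤ) (u0 : ℝ)
    (heq : (A:ℝ) * u0^2 + B * u0 + C = 0)
    (he1 : |(P:ℝ) - u0 * Q| ≤ 1) (heQ : |(P:ℝ) - u0 * Q| * Q ≤ 1)
    (hQ0 : (0:ℝ) ≤ (Q:ℝ)) :
    |((A*P^2 + B*P*Q + C*Q^2 : ℤ) : ℝ)| ≤ |(A:ℝ)| * (1 + 2*|u0|) + |(B:ℝ)| := by
  have key : ((A*P^2 + B*P*Q + C*Q^2 : ℤ) : ℝ)
      = ((P:ℝ) - u0*Q) * ((A:ℝ)*((((P:ℝ) - u0*Q)) + 2*u0*Q) + (B:ℝ)*Q) := by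
    push_cast
    linear_combination (Q:ℝ)^2 * heq
  set e := (P:ℝ) - u0*Q with he
  rw [key, abs_mul]
  have h2 : |(A:ℝ)*(e + 2*u0*Q) + (B:ℝ)*Q| ≤ |(A:ℝ)| *(|e| + 2*|u0| *Q) + |(B:ℝ)| *Q := by
    calc |(A:ℝ)*(e + 2*u0*Q) + (B:ℝ)*Q| ≤ |(A:ℝ)*(e + 2*u0*Q)| + |(B:ℝ)*Q| := abs_add_le _ _
      _ = |(A:ℝ)| *|e + 2*u0*Q| + |(B:ℝ)| *Q := by rw [abs_mul, abs_mul, abs_of_nonneg hQ0]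
      _ ≤ |(A:ℝ)| *(|e| + 2*|u0| *Q) + |(B:ℝ)| *Q := by
          have : |e + 2*u0*Q| ≤ |e| + 2*|u0| *Q := by
            calc |e + 2*u0*Q| ≤ |e| + |2*u0*Q| := abs_add_le _ _
              _ = |e| + 2*|u0| *Q := by
                  rw [abs_mul, abs_mul, abs_two, abs_of_nonneg hQ0]
          have hA0 := abs_nonneg (A:ℝ)
          nlinarith
  have h4 : |e| *|e| ≤ 1 := by nlinarith [abs_nonneg e]
  calc |e| * |(A:ℝ)*(e + 2*u0*Q) + (B:ℝ)*Q| ≤ |e| * (|(A:ℝ)| *(|e| + 2*|u0| *Q) + |(B:ℝ)| *Q) :=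
        mul_le_mul_of_nonneg_left h2 (abs_nonneg e)
    _ = |(A:ℝ)| *(|e| *|e|) + 2*|(A:ℝ)| *|u0| *(|e| *Q) + |(B:ℝ)| *(|e| *Q) := by ring
    _ ≤ |(A:ℝ)| *1 + 2*|(A:ℝ)| *|u0| *1 + |(B:ℝ)| *1 := by
        gcongr <;> positivity
    _ = |(A:ℝ)| * (1 + 2*|u0|) + |(B:ℝ)| := by ring

private lemma int_abs_le_of_sq_le (x R : ℤ) (h : x^2 ≤ R) : |x| ≤ R := by
  rcases eq_or_ne x 0 with rfl | hx
  · simpa using by nlinarith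
  · have h1 : 1 ≤ |x| := Int.one_le_abs hx
    nlinarith [sq_abs x, abs_nonneg x]

private lemma cf_periodic_of_quad (u : ℕ → ℝ) (b : ℕ → ℤ)
    (hb : ∀ n, b n = ⌊u n⌋)
    (hbu : ∀ n, (b n : ℝ) < u n ∧ u n < b n + 1)
    (hb1 : ∀ n, 1 ≤ b n)
    (hmul : ∀ n, (u n - b n) * u (n+1) = 1)
    (hirr : ∀ n, Irrational (u n))
    (A B C : ℤ) (hA : A ≠ 0) (heq : (A:ℝ) * (u 0)^2 + B * u 0 + C = 0) :
    ∃ N p : ℕ, 0 < p ∧ ∀ n, N ≤ n → b (n + p) = b n := by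
  have hu1 : ∀ n, 1 < u n := fun n => by
    have h1 := (hbu n).1
    have h2 : (1 : ℝ) ≤ b n := by exact_mod_cast hb1 n
    linarith
  have hq := cf_q b hb1
  have hid := cf_id u b hmul
  -- the discriminant is nonzero
  have hD0 : B^2 - 4*A*C ≠ 0 := by
    intro h0
    have hAR : (A:ℝ) ≠ 0 := by exact_mod_cast hA
    have hsq : (2*(A:ℝ)*u 0 + B)^2 = ((B^2 - 4*A*C : ℤ):ℝ) := by
      push_cast
      linear_combination (4*(A:ℝ)) * heq
    rw [h0] at hsq
    simp only [Int.cast_zero] at hsq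
    have hz : 2*(A:ℝ)*u 0 + B = 0 := by
      have := sq_eq_zero_iff.mp hsq
      exact this
    refine hirr 0 ⟨(-B)/(2*A), ?_⟩
    push_cast
    field_simp
    linarith
  -- the transformed coefficients
  set An : ℕ → ℤ := fun n =>
    A * (cfM b n).1.1^2 + B * (cfM b n).1.1 * (cfM b n).2.1 + C * (cfM b n).2.1^2 with hAn
  set Bn : ℕ → ℤ := fun n =>
    2*A*(cfM b n).1.1*(cfM b n).1.2 + B*((cfM b n).1.1*(cfM b n).2.2 + (cfM b n).1.2*(cfM b n).2.1)
      + 2*C*(cfM b n).2.1*(cfM b n).2.2 with hBn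
  set Cn : ℕ → ℤ := fun n =>
    A * (cfM b n).1.2^2 + B * (cfM b n).1.2 * (cfM b n).2.2 + C * (cfM b n).2.2^2 with hCn
  have hroot : ∀ n, (An n : ℝ) * (u n)^2 + (Bn n : ℝ) * u n + (Cn n : ℝ) = 0 := by
    intro n
    simpa [hAn, hBn, hCn] using
      root_transform A B C (cfM b n).1.1 (cfM b n).1.2 (cfM b n).2.1 (cfM b n).2.2
        (u 0) (u n) heq (hid n)
  have hdisc : ∀ n, (Bn n)^2 - 4 * An n * Cn n = B^2 - 4*A*C := by
    intro n
    have h1 := disc_eq A B C (cfM b n).1.1 (cfM b n).1.2 (cfM b n).2.1 (cfM b n).2.2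
    have h2 := cf_det b n
    have h3 : ((cfM b n).1.1 * (cfM b n).2.2 - (cfM b n).1.2 * (cfM b n).2.1)^2 = 1 := by
      rw [h2, ← pow_mul, mul_comm n 2, pow_mul]
      norm_num
    simp only [hAn, hBn, hCn]
    rw [h1, h3, mul_one]
  -- bounds
  have hkey : ∀ n, (((cfM b n).1.1 : ℝ) - u 0 * (cfM b n).2.1)
      * (((cfM b n).2.1 : ℝ) * u n + (cfM b n).2.2) = (-1:ℝ)^n := by
    intro n
    have hdetR : (((cfM b n).1.1 : ℝ) * (cfM b n).2.2 - (cfM b n).1.2 * (cfM b n).2.1)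
        = (-1 : ℝ)^n := by exact_mod_cast congrArg (Int.cast : ℤ → ℝ) (cf_det b n)
    linear_combination (-((cfM b n).2.1 : ℝ)) * hid n + hdetR
  have hD1 : ∀ n, 1 ≤ ((cfM b n).2.1 : ℝ) * u n + (cfM b n).2.2 := by
    intro n
    rcases Nat.eq_zero_or_pos n with rfl | hn
    · norm_num [cfM]
    · have hQ1 : (1:ℝ) ≤ ((cfM b n).2.1 : ℝ) := by exact_mod_cast (hq n).2.2.2.1 hn
      have hQ'0 : (0:ℝ) ≤ ((cfM b n).2.2 : ℝ) := by exact_mod_cast (hq n).2.1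
      nlinarith [hu1 n]
  have hDQ : ∀ n, ((cfM b n).2.1 : ℝ) ≤ ((cfM b n).2.1 : ℝ) * u n + (cfM b n).2.2 := by
    intro n
    have hQ0 : (0:ℝ) ≤ ((cfM b n).2.1 : ℝ) := by exact_mod_cast (hq n).1
    have hQ'0 : (0:ℝ) ≤ ((cfM b n).2.2 : ℝ) := by exact_mod_cast (hq n).2.1
    nlinarith [hu1 n]
  have heD : ∀ n, |((cfM b n).1.1 : ℝ) - u 0 * (cfM b n).2.1|
      * (((cfM b n).2.1 : ℝ) * u n + (cfM b n).2.2) = 1 := by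
    intro n
    have h0 : (0:ℝ) < ((cfM b n).2.1 : ℝ) * u n + (cfM b n).2.2 :=
      lt_of_lt_of_le one_pos (hD1 n)
    calc |((cfM b n).1.1 : ℝ) - u 0 * (cfM b n).2.1| * (((cfM b n).2.1 : ℝ) * u n + (cfM b n).2.2)
          = |(((cfM b n).1.1 : ℝ) - u 0 * (cfM b n).2.1)
              * (((cfM b n).2.1 : ℝ) * u n + (cfM b n).2.2)| := by
            rw [abs_mul, abs_of_pos h0]
        _ = |(-1:ℝ)^n| := by rw [hkey n]
        _ = 1 := by rw [abs_pow, abs_neg, abs_one, one_pow]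
  have he1 : ∀ n, |((cfM b n).1.1 : ℝ) - u 0 * (cfM b n).2.1| ≤ 1 := by
    intro n
    have h := heD n
    nlinarith [hD1 n, abs_nonneg (((cfM b n).1.1 : ℝ) - u 0 * (cfM b n).2.1)]
  have heQ : ∀ n, |((cfM b n).1.1 : ℝ) - u 0 * (cfM b n).2.1| * ((cfM b n).2.1 : ℝ) ≤ 1 := by
    intro n
    have h := heD n
    nlinarith [hDQ n, abs_nonneg (((cfM b n).1.1 : ℝ) - u 0 * (cfM b n).2.1)]
  -- integer bounds
  set K : ℝ := |(A:ℝ)| * (1 + 2*|u 0|) + |(B:ℝ)| with hK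
  set M : ℤ := ⌈K⌉ with hM
  have hM0 : 0 ≤ M := Int.ceil_nonneg (by positivity)
  have hAb : ∀ n, |An n| ≤ M := by
    intro n
    have hQ0 : (0:ℝ) ≤ ((cfM b n).2.1 : ℝ) := by exact_mod_cast (hq n).1
    have h := An_bound A B C (cfM b n).1.1 (cfM b n).2.1 (u 0) heq (he1 n) (heQ n) hQ0
    have h2 : |(An n : ℝ)| ≤ K := by
      simpa [hAn, hK] using h
    have h3 : ((|An n| : ℤ) : ℝ) ≤ (M : ℝ) := by
      rw [Int.cast_abs]
      exact le_trans h2 (Int.le_ceil K)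
    exact_mod_cast h3
  have hCb : ∀ n, |Cn n| ≤ M + |C| := by
    intro n
    rcases n with _ | n
    · have : Cn 0 = C := by simp [hCn, cfM]
      rw [this]
      omega
    · have hsame : Cn (n+1) = An n := by
        simp only [hCn, hAn]
        rfl
      rw [hsame]
      have := hAb n
      have := abs_nonneg C
      omega
  set R : ℤ := |B^2 - 4*A*C| + 4*(M*(M+|C|)) with hR
  have hBb : ∀ n, |Bn n| ≤ R := by
    intro n
    refine int_abs_le_of_sq_le _ _ ?_
    have h1 : (Bn n)^2 = (B^2 - 4*A*C) + 4 * (An n * Cn n) := by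
      have := hdisc n
      linarith
    have h2 : An n * Cn n ≤ |An n| * |Cn n| := (le_abs_self _).trans (abs_mul _ _).le
    have h3 : |An n| * |Cn n| ≤ M * (M + |C|) :=
      mul_le_mul (hAb n) (hCb n) (abs_nonneg _) (by exact_mod_cast hM0)
    have h4 := le_abs_self (B^2 - 4*A*C)
    linarith
  -- pigeonhole: three indices with the same coefficient triple
  set t : Finset (ℤ×ℤ×ℤ) :=
    Finset.Icc (-M) M ×ˢ Finset.Icc (-R) R ×ˢ Finset.Icc (-(M+|C|)) (M+|C|) with ht
  set f : ℕ → ℤ×ℤ×ℤ := fun n => (An n, Bn n, Cn n) with hf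
  have hmapsto : ∀ n ∈ Finset.range (2*t.card + 1), f n ∈ t := by
    intro n _
    simp only [hf, ht, Finset.mem_product, Finset.mem_Icc]
    refine ⟨abs_le.mp (hAb n), abs_le.mp (hBb n), abs_le.mp (hCb n)⟩
  have hcard : t.card * 2 < (Finset.range (2*t.card + 1)).card := by
    rw [Finset.card_range]
    omega
  obtain ⟨y, _, hy3⟩ := Finset.exists_lt_card_fiber_of_mul_lt_card_of_maps_to hmapsto hcard
  obtain ⟨n1, hn1, n2, hn2, n3, hn3, h12, h13, h23⟩ := Finset.two_lt_card.mp hy3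
  rw [Finset.mem_filter] at hn1 hn2 hn3
  have hfy : ∀ i : ℕ, f i = y → (y.1 : ℝ) * (u i)^2 + (y.2.1 : ℝ) * u i + (y.2.2 : ℝ) = 0 := by
    intro i hi
    have e1 : An i = y.1 := by rw [← hi]
    have e2 : Bn i = y.2.1 := by rw [← hi]
    have e3 : Cn i = y.2.2 := by rw [← hi]
    rw [← e1, ← e2, ← e3]
    exact hroot i
  have hr1 := hfy n1 hn1.2
  have hr2 := hfy n2 hn2.2
  have hr3 := hfy n3 hn3.2
  have hα : y.1 ≠ 0 := by
    have e1 : An n1 = y.1 := by rw [← hn1.2]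
    have e2 : Bn n1 = y.2.1 := by rw [← hn1.2]
    have e3 : Cn n1 = y.2.2 := by rw [← hn1.2]
    refine quad_nonzero (u n1) (hirr n1) y.1 y.2.1 y.2.2 hr1 ?_
    rw [← e1, ← e2, ← e3, hdisc n1]
    exact hD0
  have hαR : (y.1 : ℝ) ≠ 0 := by exact_mod_cast hα
  -- two of the three values coincide
  have hex : ∃ m k : ℕ, m ≠ k ∧ u m = u k := by
    by_cases e12 : u n1 = u n2
    · exact ⟨n1, n2, h12, e12⟩
    by_cases e13 : u n1 = u n3
    · exact ⟨n1, n3, h13, e13⟩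
    by_cases e23 : u n2 = u n3
    · exact ⟨n2, n3, h23, e23⟩
    exfalso
    have k12 : (y.1 : ℝ) * (u n1 + u n2) + y.2.1 = 0 := by
      have hz : (u n1 - u n2) * ((y.1 : ℝ) * (u n1 + u n2) + y.2.1) = 0 := by
        linear_combination hr1 - hr2
      exact (mul_eq_zero.mp hz).resolve_left (sub_ne_zero.mpr e12)
    have k13 : (y.1 : ℝ) * (u n1 + u n3) + y.2.1 = 0 := by
      have hz : (u n1 - u n3) * ((y.1 : ℝ) * (u n1 + u n3) + y.2.1) = 0 := by
        linear_combination hr1 - hr3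
      exact (mul_eq_zero.mp hz).resolve_left (sub_ne_zero.mpr e13)
    have : (y.1 : ℝ) * (u n2 - u n3) = 0 := by linear_combination k12 - k13
    have h' := (mul_eq_zero.mp this).resolve_left hαR
    exact e23 (by linarith)
  obtain ⟨m0, k0, hmk0, humk0⟩ := hex
  -- order them
  obtain ⟨m, k, hmk, humk⟩ : ∃ m k : ℕ, m < k ∧ u m = u k := by
    rcases lt_or_gt_of_ne hmk0 with h | h
    · exact ⟨m0, k0, h, humk0⟩
    · exact ⟨k0, m0, h, humk0.symm⟩
  -- CF recursion: u (n+1) = 1/(u n - b n)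
  have hbne : ∀ n, u n - (b n : ℝ) ≠ 0 := fun n => by
    have := (hbu n).1
    intro h
    linarith [this, (le_of_eq h.symm : (0:ℝ) ≤ u n - b n)]
  have hurec : ∀ n, u (n+1) = 1/(u n - b n) := by
    intro n
    rw [eq_div_iff (hbne n)]
    linear_combination hmul n
  set p := k - m with hpdef
  have hp0 : 0 < p := by omega
  have hkm : k = m + p := by omega
  have hstep : ∀ j : ℕ, u (m + j + p) = u (m + j) := by
    intro j
    induction j with
    | zero =>
      have : m + 0 + p = k := by omega
      rw [this]
      simpa using humk.symm
    | succ j ih =>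
      have hb' : b (m + j + p) = b (m + j) := by rw [hb, hb, ih]
      have e1 : m + (j+1) + p = (m + j + p) + 1 := by omega
      rw [e1, hurec (m + j + p), ih, hb']
      exact (hurec (m + j)).symm
  refine ⟨m, p, hp0, fun n hn => ?_⟩
  have e2 : n + p = m + (n - m) + p := by omega
  have e3 : m + (n - m) = n := by omega
  rw [hb, hb, e2, hstep (n - m), e3]

/-- Lagrange's theorem: an irrational real `ξ`, with continued fraction expansion given by
complete quotients `x 0 = ξ`, `x (n+1) = 1 / (x n - ⌊x n⌋)` and partial quotients
`a n = ⌊x n⌋`, has an eventually periodic sequence of partial quotients iff `ξ` is a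
quadratic irrational (algebraic of degree exactly `2` over `ℚ`). -/
theorem periodic_continued_fraction_iff_quadratic (ξ : ℝ) (hirr : Irrational ξ)
    (x : ℕ → ℝ) (a : ℕ → ℤ) (hx0 : x 0 = ξ) (ha : ∀ n : ℕ, a n = ⌊x n⌋)
    (hrec : ∀ n : ℕ, x (n + 1) = 1 / (x n - (a n : ℝ))) :
    (∃ N p : ℕ, 0 < p ∧ ∀ n : ℕ, N ≤ n → a (n + p) = a n) ↔
      (IsAlgebraic ℚ ξ ∧ (minpoly ℚ ξ).natDegree = 2) := by
  have hxirr : ∀ n, Irrational (x n) := by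
    intro n
    induction n with
    | zero => rwa [hx0]
    | succ n ih =>
      rw [hrec n, one_div]
      exact (Irrational.sub_intCast ih (a n)).inv
  have hfr : ∀ n, (0:ℝ) < x n - a n ∧ x n - a n < 1 := by
    intro n
    rw [ha n]
    constructor
    · rcases (Int.floor_le (x n)).lt_or_eq with h | h
      · linarith
      · exact absurd h.symm ((hxirr n).ne_int _)
    · linarith [Int.lt_floor_add_one (x n)]
  have hmulx : ∀ n, (x n - a n) * x (n+1) = 1 := by
    intro n
    rw [hrec n, mul_one_div]
    exact div_self (hfr n).1.ne' 
  have hbx : ∀ n, ((a n : ℝ) < x n ∧ x n < a n + 1) := fun n =>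
    ⟨by linarith [(hfr n).1], by linarith [(hfr n).2]⟩
  have hx1 : ∀ n, 1 < x (n+1) := by
    intro n
    rw [hrec n, lt_div_iff₀ (hfr n).1, one_mul]
    exact (hfr n).2
  have ha1 : ∀ n, 1 ≤ a (n+1) := by
    intro n
    rw [ha (n+1), Int.le_floor]
    exact_mod_cast (hx1 n).le
  have hstep : ∀ n, QuadI (x n) ↔ QuadI (x (n+1)) := fun n =>
    quad_step (x n) (x (n+1)) (a n) (hxirr n) (hxirr (n+1)) (by linear_combination hmulx n)
  have hall : ∀ n, QuadI (x n) ↔ QuadI (x 0) := by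
    intro n
    induction n with
    | zero => exact Iff.rfl
    | succ n ih => exact (hstep n).symm.trans ih
  rw [← quadI_iff_deg2 ξ hirr]
  constructor
  · rintro ⟨N, p, hp, hper⟩
    set N' := N + 1 with hN'
    have hperN : ∀ k, a (N' + k + p) = a (N' + k) := fun k => hper (N' + k) (by omega)
    have eqa : ∀ k, a (N' + p + k) = a (N' + k) := fun k =>
      (congrArg a (by omega : N' + p + k = N' + k + p)).trans (hperN k)
    have hequv : x N' = x (N' + p) := by
      refine cf_eq_of_same (fun k => x (N' + k)) (fun k => x (N' + p + k)) (fun k => a (N' + k))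
        (fun k => hbx (N' + k)) ?_ ?_ (fun k => hmulx (N' + k)) ?_
      · intro k
        have h := hbx (N' + p + k)
        rwa [eqa k] at h
      · intro k
        have h := ha1 (N + k)
        rwa [show (N + k) + 1 = N' + k from by omega] at h
      · intro k
        have h := hmulx (N' + p + k)
        rwa [eqa k] at h
    have hquad : QuadI (x N') := by
      obtain ⟨A, B, C, hA, hq⟩ := cf_quad_of_periodic (fun k => x (N' + k)) (fun k => a (N' + k))
        (fun k => hmulx (N' + k))
        (fun k => by
          have h := ha1 (N + k)
          rwa [show (N + k) + 1 = N' + k from by omega] at h)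
        p hp (show x (N' + p) = x (N' + 0) from by rw [Nat.add_zero]; exact hequv.symm)
      exact ⟨A, B, C, hA, hq⟩
    have := (hall N').mp hquad
    rwa [hx0] at this
  · intro hq0
    have hq1 : QuadI (x 1) := by
      rw [← hx0] at hq0
      exact (hstep 0).mp hq0
    obtain ⟨A, B, C, hA, heq⟩ := hq1
    obtain ⟨m, p, hp, hper⟩ := cf_periodic_of_quad (fun k => x (k+1)) (fun k => a (k+1))
      (fun k => ha (k+1)) (fun k => hbx (k+1)) (fun k => ha1 k) (fun k => hmulx (k+1))
      (fun k => hxirr (k+1)) A B C hA heq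
    refine ⟨m + 1, p, hp, fun n hn => ?_⟩
    have h := hper (n - 1) (by omega)
    calc a (n + p) = a (((n-1) + p) + 1) := by rw [show n + p = ((n-1) + p) + 1 from by omega]
      _ = a ((n-1) + 1) := h
      _ = a n := by rw [show (n-1) + 1 = n from by omega]
end
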